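/- Let (g,J) be an 8-dimensional nilpotent Lie algebra with weakly non-nilpotent complex structure given by a (1,0)-basis with dω¹ = 0, dω² = ω¹³ + ω^{1 3̄}, dω³ = iδ(ω^{1 2̄} − ω^{2 1̄}), dω⁴ = a ω¹² + ω²³ + B ω^{1 1̄} + ω^{2 3̄} (δ = ±1; a = 0, B ∈ {0,1} or a = 1, B ∈ ℂ with Im B ≥ 0), and let ⟨·,·⟩ be any pseudo-Kähler metric on (g,J), with fundamental form F = i u ω^{1 1̄} − i s ω^{2 2̄} − i δ r ω^{3 3̄} + v ω^{1 2̄} − v ω^{2 1̄} + i a δ(r−is) ω^{1 3̄} + i a δ(r+is) ω^{3 1̄} + (r+is) ω^{1 4̄} − (r−is) ω^{4 1̄}, r,s,u,v ∈ ℝ, rs ≠ 0. Let ∇ be the Levi-Civita connection determined by the Koszul formula 2⟨∇_U V, W⟩ = ⟨[U,V],W⟩ − ⟨[V,W],U⟩ + ⟨[W,U],V⟩, and let R(U,V,W,T) = ⟨∇_U∇_V W − ∇_V∇_U W − ∇_{[U,V]} W, T⟩ be its curvature. Then, denoting by {Z_k} the (1,0)-frame dual to {ω^k} in the complexification, R(Z₁,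 Z̄₁, Z₂, Z̄₂) = −δ r ≠ 0; in particular the metric is non-flat. -/
import Mathlib

noncomputable section

open Complex Module
open scoped TensorProduct

namespace Paper

/-- The ascending central series of a real Lie algebra. -/
def ascSeries (g : Type*) [LieRing g] [LieAlgebra ℝ g] : ℕ → Submodule ℝ g
  | 0 => ⊥
  | k + 1 =>
    { carrier := {X : g | ∀ Y : g, ⁅X, Y⁆ ∈ ascSeries g k}
      add_mem' := fun ha hb Y => by
        rw [add_lie]; exact Submodule.add_mem _ (ha Y) (hb Y)
      zero_mem' := fun Y => by rw [zero_lie]; exact Submodule.zero_mem _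
      smul_mem' := fun c x hx Y => by rw [smul_lie]; exact Submodule.smul_mem _ c (hx Y) }

/-- A Lie algebra is nilpotent when its ascending central series reaches the whole algebra. -/
def IsNilpotentLie (g : Type*) [LieRing g] [LieAlgebra ℝ g] : Prop :=
  ∃ s : ℕ, ascSeries g s = ⊤

/-- A (integrable) complex structure on a real Lie algebra. -/
structure ComplexStructure (g : Type*) [LieRing g] [LieAlgebra ℝ g] where
  J : g →ₗ[ℝ] g
  j_sq : ∀ X : g, J (J X) = -X
  integrable : ∀ X Y : g, ⁅X, Y⁆ + J ⁅J X, Y⁆ + J ⁅X, J Y⁆ - ⁅J X, J Y⁆ = 0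

namespace ComplexStructure

variable {g g' : Type*} [LieRing g] [LieAlgebra ℝ g] [LieRing g'] [LieAlgebra ℝ g']

/-- The ascending `J`-compatible series `a_k(J)`. -/
def aSeries (Jc : ComplexStructure g) : ℕ → Submodule ℝ g
  | 0 => ⊥
  | k + 1 =>
    { carrier := {X : g | (∀ Y : g, ⁅X, Y⁆ ∈ aSeries Jc k) ∧ (∀ Y : g, ⁅Jc.J X, Y⁆ ∈ aSeries Jc k)}
      add_mem' := fun ha hb => by
        refine ⟨fun Y => ?_, fun Y => ?_⟩
        · rw [add_lie]; exact Submodule.add_mem _ (ha.1 Y) (hb.1 Y)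
        · rw [map_add, add_lie]; exact Submodule.add_mem _ (ha.2 Y) (hb.2 Y)
      zero_mem' := by
        refine ⟨fun Y => ?_, fun Y => ?_⟩
        · rw [zero_lie]; exact Submodule.zero_mem _
        · rw [map_zero, zero_lie]; exact Submodule.zero_mem _
      smul_mem' := fun c x hx => by
        refine ⟨fun Y => ?_, fun Y => ?_⟩
        · rw [smul_lie]; exact Submodule.smul_mem _ c (hx.1 Y)
        · rw [map_smul, smul_lie]; exact Submodule.smul_mem _ c (hx.2 Y) }

/-- Quasi-nilpotent complex structure: `a₁(J) ≠ 0`. -/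
def IsQuasiNilpotent (Jc : ComplexStructure g) : Prop := Jc.aSeries 1 ≠ ⊥

/-- Strongly non-nilpotent complex structure: `a₁(J) = 0`. -/
def IsSnN (Jc : ComplexStructure g) : Prop := Jc.aSeries 1 = ⊥

/-- Weakly non-nilpotent complex structure: `a₁(J) ≠ 0` and the ascending compatible series
stabilizes strictly below `g`. -/
def IsWnN (Jc : ComplexStructure g) : Prop :=
  Jc.aSeries 1 ≠ ⊥ ∧ ∃ t : ℕ, Jc.aSeries t ≠ ⊤ ∧ ∀ l : ℕ, 1 ≤ l → Jc.aSeries (t + l) = Jc.aSeries t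

/-- Non-nilpotent complex structure: the ascending compatible series never reaches `g`. -/
def IsNonNilpotent (Jc : ComplexStructure g) : Prop := ∀ t : ℕ, Jc.aSeries t ≠ ⊤

/-- Equivalence of complex structures. -/
def Equiv (Jc : ComplexStructure g) (Jc' : ComplexStructure g') : Prop :=
  ∃ f : g ≃ₗ⁅ℝ⁆ g', ∀ X : g, f (Jc.J X) = Jc'.J (f X)

end ComplexStructure


/-- Complex conjugate of a complex-valued form. -/
def cF {M : Type*} (α : M → ℂ) : M → ℂ := fun X => (starRingEnd ℂ) (α X)

/-- Wedge product of two 1-forms, as a 2-form. -/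
def w2 {M R : Type*} [CommRing R] (α β : M → R) (X Y : M) : R := α X * β Y - α Y * β X

/-- Wedge product of three 1-forms, as a 3-form. -/
def w3 {M R : Type*} [CommRing R] (α β γ : M → R) (X Y Z : M) : R :=
  α X * w2 β γ Y Z - α Y * w2 β γ X Z + α Z * w2 β γ X Y

/-- Wedge product of four 1-forms, as a 4-form. -/
def w4 {M R : Type*} [CommRing R] (α β γ η : M → R) (W X Y Z : M) : R :=
  α W * w3 β γ η X Y Z - α X * w3 β γ η W Y Z + α Y * w3 β γ η W X Z - α Z * w3 β γ η W X Y

/-- Chevalley–Eilenberg differential of a 1-form: `dα(X,Y) = -α([X,Y])`. -/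
def dd {g R : Type*} [LieRing g] [CommRing R] (α : g → R) (X Y : g) : R := -α ⁅X, Y⁆

variable {g : Type*} [LieRing g] [LieAlgebra ℝ g]

/-- `ω` is a basis of (1,0)-forms for `(g,J)` (here `dim ℝ g = 8`): each `ω k` is of bidegree
(1,0) for `J`, and the joint map `g → ℂ⁴` is bijective (so that `{ω^k, ω̄^k}` is a basis of the
complexified dual). -/
def Is10Basis (Jc : ComplexStructure g) (ω : Fin 4 → (g →ₗ[ℝ] ℂ)) : Prop :=
  (∀ (k : Fin 4) (X : g), ω k (Jc.J X) = Complex.I * ω k X) ∧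
  Function.Bijective (fun (X : g) (k : Fin 4) => ω k X)

/-- The complex structure equations (★):
`dω¹ = 0`, `dω² = ω¹³ + ω^{1 3̄}`, `dω³ = iε ω^{1 1̄} + iδ ω^{1 2̄} − iδ ω^{2 1̄}`,
`dω⁴ = A ω¹² + B ω^{1 1̄} + ν (ω²³ + 2δε ω^{1 3̄} + ω^{2 3̄})`. -/
def StarEq (ω : Fin 4 → (g →ₗ[ℝ] ℂ)) (ε δ ν : ℝ) (A B : ℂ) : Prop :=
  (∀ X Y : g, dd (⇑(ω 0)) X Y = 0) ∧
  (∀ X Y : g, dd (⇑(ω 1)) X Y = w2 (⇑(ω 0)) (⇑(ω 2)) X Y + w2 (⇑(ω 0)) (cF ⇑(ω 2)) X Y) ∧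
  (∀ X Y : g, dd (⇑(ω 2)) X Y
      = Complex.I * (ε : ℂ) * w2 (⇑(ω 0)) (cF ⇑(ω 0)) X Y
        + Complex.I * (δ : ℂ) * w2 (⇑(ω 0)) (cF ⇑(ω 1)) X Y
        - Complex.I * (δ : ℂ) * w2 (⇑(ω 1)) (cF ⇑(ω 0)) X Y) ∧
  (∀ X Y : g, dd (⇑(ω 3)) X Y
      = A * w2 (⇑(ω 0)) (⇑(ω 1)) X Y + B * w2 (⇑(ω 0)) (cF ⇑(ω 0)) X Y
        + (ν : ℂ) * (w2 (⇑(ω 1)) (⇑(ω 2)) X Y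
            + 2 * (δ : ℂ) * (ε : ℂ) * w2 (⇑(ω 0)) (cF ⇑(ω 2)) X Y
            + w2 (⇑(ω 1)) (cF ⇑(ω 2)) X Y))

/-- The admissible range of the parameters `(ε,δ,ν,a,B)` in Theorem 3.1. -/
def Admissible (ε δ ν a : ℝ) (B : ℂ) : Prop :=
  (ε = 0 ∨ ε = 1) ∧ (δ = 1 ∨ δ = -1) ∧
  ((ν = 0 ∧ a = 0 ∧ B = 0) ∨
   (ν = 0 ∧ a = 0 ∧ B = 1) ∨
   ((ν = 0 ∨ ν = 1) ∧ a = 1 - ν ∧ (∃ b : ℝ, 0 ≤ b ∧ B = (b : ℂ)) ∧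
      (ε = 0 → (B = 0 ∨ B = 1))) ∨
   (ν = 1 ∧ 0 < a ∧ (ε = 0 → (a = 1 ∧ 0 ≤ B.im))))

/-- A pseudo-Kähler structure on `(g,J)`: a closed, `J`-invariant, nondegenerate 2-form. -/
structure PseudoKahlerForm (Jc : ComplexStructure g) where
  F : g →ₗ[ℝ] g →ₗ[ℝ] ℝ
  antisymm : ∀ X Y : g, F X Y = -F Y X
  compat : ∀ X Y : g, F (Jc.J X) (Jc.J Y) = F X Y
  closed : ∀ X Y Z : g, F ⁅X, Y⁆ Z - F ⁅X, Z⁆ Y + F ⁅Y, Z⁆ X = 0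
  nondeg : ∀ X : g, (∀ Y : g, F X Y = 0) → X = 0


variable {g : Type*} [LieRing g] [LieAlgebra ℝ g] in
/-- The admissible parameters `(a,B)` for pseudo-Kähler WnN structures in Theorem 5.1 i). -/
def PKParam (a : ℝ) (B : ℂ) : Prop := (a = 0 ∧ (B = 0 ∨ B = 1)) ∨ (a = 1 ∧ 0 ≤ B.im)

variable {g : Type*} [LieRing g] [LieAlgebra ℝ g] in
/-- The structure equations (5.2) of a pseudo-Kähler WnN complex structure:
`dω¹ = 0`, `dω² = ω¹³ + ω^{1 3̄}`, `dω³ = iδ(ω^{1 2̄} − ω^{2 1̄})`,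
`dω⁴ = a ω¹² + ω²³ + B ω^{1 1̄} + ω^{2 3̄}`; this is (★) with `ε = 0`, `ν = 1`. -/
def PKStarEq (ω : Fin 4 → (g →ₗ[ℝ] ℂ)) (δ a : ℝ) (B : ℂ) : Prop :=
  StarEq ω 0 δ 1 (a : ℂ) B

variable {g : Type*} [LieRing g] [LieAlgebra ℝ g] in
/-- The fundamental form
`F = iu ω^{1 1̄} − is ω^{2 2̄} − iδr ω^{3 3̄} + v ω^{1 2̄} − v ω^{2 1̄} + iaδ(r−is) ω^{1 3̄}
   + iaδ(r+is) ω^{3 1̄} + (r+is) ω^{1 4̄} − (r−is) ω^{4 1̄}` of Theorem 5.1 i). -/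
def pkFundForm (ω : Fin 4 → (g →ₗ[ℝ] ℂ)) (δ a r s u v : ℝ) (X Y : g) : ℂ :=
  Complex.I * (u : ℂ) * w2 (⇑(ω 0)) (cF ⇑(ω 0)) X Y
  - Complex.I * (s : ℂ) * w2 (⇑(ω 1)) (cF ⇑(ω 1)) X Y
  - Complex.I * (δ : ℂ) * (r : ℂ) * w2 (⇑(ω 2)) (cF ⇑(ω 2)) X Y
  + (v : ℂ) * w2 (⇑(ω 0)) (cF ⇑(ω 1)) X Y
  - (v : ℂ) * w2 (⇑(ω 1)) (cF ⇑(ω 0)) X Y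
  + Complex.I * (a : ℂ) * (δ : ℂ) * ((r : ℂ) - Complex.I * (s : ℂ))
      * w2 (⇑(ω 0)) (cF ⇑(ω 2)) X Y
  + Complex.I * (a : ℂ) * (δ : ℂ) * ((r : ℂ) + Complex.I * (s : ℂ))
      * w2 (⇑(ω 2)) (cF ⇑(ω 0)) X Y
  + ((r : ℂ) + Complex.I * (s : ℂ)) * w2 (⇑(ω 0)) (cF ⇑(ω 3)) X Y
  - ((r : ℂ) - Complex.I * (s : ℂ)) * w2 (⇑(ω 3)) (cF ⇑(ω 0)) X Y

variable {g : Type*} [LieRing g] [LieAlgebra ℝ g] in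
/-- The structure equations of Family I of SnN complex structures in dimension 8:
`dω¹ = 0`, `dω² = ε ω^{1 1̄}`, `dω³ = ω¹⁴ + ω^{1 4̄} + a ω^{2 1̄} + iδεb ω^{1 2̄}`,
`dω⁴ = iν ω^{1 1̄} + b ω^{2 2̄} + iδ(ω^{1 3̄} − ω^{3 1̄})`. -/
def FamilyIEq (ω : Fin 4 → (g →ₗ[ℝ] ℂ)) (ε δ ν a b : ℝ) : Prop :=
  (∀ X Y : g, dd (⇑(ω 0)) X Y = 0) ∧
  (∀ X Y : g, dd (⇑(ω 1)) X Y = (ε : ℂ) * w2 (⇑(ω 0)) (cF ⇑(ω 0)) X Y) ∧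
  (∀ X Y : g, dd (⇑(ω 2)) X Y
      = w2 (⇑(ω 0)) (⇑(ω 3)) X Y + w2 (⇑(ω 0)) (cF ⇑(ω 3)) X Y
        + (a : ℂ) * w2 (⇑(ω 1)) (cF ⇑(ω 0)) X Y
        + Complex.I * (δ : ℂ) * (ε : ℂ) * (b : ℂ) * w2 (⇑(ω 0)) (cF ⇑(ω 1)) X Y) ∧
  (∀ X Y : g, dd (⇑(ω 3)) X Y
      = Complex.I * (ν : ℂ) * w2 (⇑(ω 0)) (cF ⇑(ω 0)) X Y
        + (b : ℂ) * w2 (⇑(ω 1)) (cF ⇑(ω 1)) X Y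
        + Complex.I * (δ : ℂ)
            * (w2 (⇑(ω 0)) (cF ⇑(ω 2)) X Y - w2 (⇑(ω 2)) (cF ⇑(ω 0)) X Y))

open ComplexConjugate

lemma tmul_I_eq {g : Type*} [AddCommGroup g] [Module ℝ g] (X : g) :
    (Complex.I) ⊗ₜ[ℝ] X = Complex.I • ((1:ℂ) ⊗ₜ[ℝ] X) := by
  rw [TensorProduct.smul_tmul', smul_eq_mul, mul_one]

lemma decompAux {g : Type*} [AddCommGroup g] [Module ℝ g] (V : ℂ ⊗[ℝ] g) :
    ∃ X Y : g, V = (1:ℂ) ⊗ₜ[ℝ] X + Complex.I ⊗ₜ[ℝ] Y := by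
  induction V using TensorProduct.induction_on with
  | zero => exact ⟨0, 0, by simp⟩
  | tmul z X =>
    refine ⟨z.re • X, z.im • X, ?_⟩
    rw [TensorProduct.tmul_smul, TensorProduct.tmul_smul, TensorProduct.smul_tmul',
      TensorProduct.smul_tmul', ← TensorProduct.add_tmul]
    congr 1
    simp [Complex.real_smul]
  | add u v hu hv =>
    obtain ⟨X1, Y1, rfl⟩ := hu
    obtain ⟨X2, Y2, rfl⟩ := hv
    exact ⟨X1 + X2, Y1 + Y2, by rw [TensorProduct.tmul_add, TensorProduct.tmul_add]; abel⟩

/-- Gram matrix `G (Z j) (Zb k)` of the pseudo-Kähler metric in the frame. -/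
def gramM (δ a r s u v : ℝ) : Fin 4 → Fin 4 → ℂ := fun j k =>
  if j = 0 then
    (if k = 0 then -(u:ℂ) else if k = 1 then Complex.I*(v:ℂ)
     else if k = 2 then -((a:ℂ)*(δ:ℂ)*((r:ℂ) - Complex.I*(s:ℂ)))
     else Complex.I*((r:ℂ) + Complex.I*(s:ℂ)))
  else if j = 1 then
    (if k = 0 then -(Complex.I*(v:ℂ)) else if k = 1 then (s:ℂ) else 0)
  else if j = 2 then
    (if k = 0 then -((a:ℂ)*(δ:ℂ)*((r:ℂ) + Complex.I*(s:ℂ))) else if k = 2 then (δ:ℂ)*(r:ℂ) else 0)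
  else
    (if k = 0 then -(Complex.I*((r:ℂ) - Complex.I*(s:ℂ))) else 0)


set_option maxHeartbeats 0 in
/-- Proposition 5.2 (WnN case): every invariant pseudo-Kähler metric on an 8-dimensional
nilpotent Lie algebra with WnN complex structure is non-flat: in the complexification,
`R(Z₁, Z̄₁, Z₂, Z̄₂) = −δr ≠ 0`. -/
theorem pseudoKahler_WnN_nonflat
    {g : Type*} [LieRing g] [LieAlgebra ℝ g]
    (h8 : Module.finrank ℝ g = 8) (hg : IsNilpotentLie g)
    (Jc : ComplexStructure g) (hw : Jc.IsWnN)
    (ω : Fin 4 → (g →ₗ[ℝ] ℂ)) (δ a : ℝ) (B : ℂ)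
    (hωb : Is10Basis Jc ω) (hδ : δ = 1 ∨ δ = -1) (hpar : PKParam a B)
    (hse : PKStarEq ω δ a B)
    (P : PseudoKahlerForm Jc) (r s u v : ℝ) (hrs : r * s ≠ 0)
    (hF : ∀ X Y : g, (P.F X Y : ℂ) = pkFundForm ω δ a r s u v X Y)
    -- the complexified metric `G(Z,W) = ⟨Z,W⟩ = F(JZ,W)` on `ℂ ⊗ g`
    (G : (ℂ ⊗[ℝ] g) →ₗ[ℂ] (ℂ ⊗[ℝ] g) →ₗ[ℂ] ℂ)
    (hG : ∀ X Y : g, G ((1 : ℂ) ⊗ₜ X) ((1 : ℂ) ⊗ₜ Y) = ((P.F (Jc.J X) Y : ℝ) : ℂ))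
    -- the Levi-Civita connection, given by the (invariant) Koszul formula
    (nabla : (ℂ ⊗[ℝ] g) →ₗ[ℂ] (ℂ ⊗[ℝ] g) →ₗ[ℂ] (ℂ ⊗[ℝ] g))
    (hKoszul : ∀ U V W : ℂ ⊗[ℝ] g,
      2 * G (nabla U V) W = G ⁅U, V⁆ W - G ⁅V, W⁆ U + G ⁅W, U⁆ V)
    -- the complexified (1,0)-basis and its conjugates
    (Ω Ωb : Fin 4 → ((ℂ ⊗[ℝ] g) →ₗ[ℂ] ℂ))
    (hΩ : ∀ (k : Fin 4) (X : g), Ω k ((1 : ℂ) ⊗ₜ X) = ω k X)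
    (hΩb : ∀ (k : Fin 4) (X : g), Ωb k ((1 : ℂ) ⊗ₜ X) = (starRingEnd ℂ) (ω k X))
    -- the dual (1,0)-frame `Z_k` and its conjugate frame `Z̄_k`
    (Z Zb : Fin 4 → ℂ ⊗[ℝ] g)
    (hZ : ∀ j k : Fin 4, Ω j (Z k) = if j = k then 1 else 0)
    (hZ' : ∀ j k : Fin 4, Ωb j (Z k) = 0)
    (hZb : ∀ j k : Fin 4, Ω j (Zb k) = 0)
    (hZb' : ∀ j k : Fin 4, Ωb j (Zb k) = if j = k then 1 else 0) :
    G (nabla (Z 0) (nabla (Zb 0) (Z 1)) - nabla (Zb 0) (nabla (Z 0) (Z 1))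
        - nabla ⁅Z 0, Zb 0⁆ (Z 1)) (Zb 1)
      = -((δ : ℂ) * (r : ℂ)) ∧ δ * r ≠ 0 := by
  rcases hδ with rfl | rfl
  case inl =>
    have hrr : r ≠ 0 := left_ne_zero_of_mul hrs
    have hss : s ≠ 0 := right_ne_zero_of_mul hrs
    have hrC : (r:ℂ) ≠ 0 := Complex.ofReal_ne_zero.mpr hrr
    have hsC : (s:ℂ) ≠ 0 := Complex.ofReal_ne_zero.mpr hss
    have hne1 : ((r:ℂ) - Complex.I*(s:ℂ)) ≠ 0 := by
      intro h
      apply hrr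
      have := congrArg Complex.re h
      simpa using this
    have hne2 : ((r:ℂ) + Complex.I*(s:ℂ)) ≠ 0 := by
      intro h
      apply hrr
      have := congrArg Complex.re h
      simpa using this
    have hdrC : (1:ℂ)*(r:ℂ) ≠ 0 := by simpa using hrC
    have hI3 : Complex.I ^ 3 = -Complex.I := by
      have h3 : (3:ℕ) = 2 + 1 := rfl
      rw [h3, pow_add, Complex.I_sq, pow_one]
      ring
    have hI4 : Complex.I ^ 4 = 1 := by
      have h4 : (4:ℕ) = 2 + 2 := rfl
      rw [h4, pow_add, Complex.I_sq]
      ring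
    obtain ⟨hJ10, hbij⟩ := hωb
    unfold PKStarEq StarEq at hse
    obtain ⟨d0, d1, d2, d3⟩ := hse
    have s0 : ∀ X Y : g, ω 0 ⁅X, Y⁆ = 0 := by
      intro X Y
      have h := d0 X Y
      simp only [dd] at h
      exact neg_eq_zero.mp h
    have s1 : ∀ X Y : g, ω 1 ⁅X, Y⁆ =
        -(ω 0 X * ω 2 Y - ω 0 Y * ω 2 X) - (ω 0 X * conj (ω 2 Y) - ω 0 Y * conj (ω 2 X)) := by
      intro X Y
      have h := d1 X Y
      simp only [dd, w2, cF] at h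
      linear_combination -h
    have s2 : ∀ X Y : g, ω 2 ⁅X, Y⁆ =
        -(Complex.I * (1:ℂ) * (ω 0 X * conj (ω 1 Y) - ω 0 Y * conj (ω 1 X))
          - Complex.I * (1:ℂ) * (ω 1 X * conj (ω 0 Y) - ω 1 Y * conj (ω 0 X))) := by
      intro X Y
      have h := d2 X Y
      simp only [dd, w2, cF, Complex.ofReal_zero, Complex.ofReal_one, Complex.ofReal_neg, mul_zero, zero_mul,
        add_zero, zero_add] at h
      linear_combination -h
    have s3 : ∀ X Y : g, ω 3 ⁅X, Y⁆ =
        -((a:ℂ) * (ω 0 X * ω 1 Y - ω 0 Y * ω 1 X)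
          + B * (ω 0 X * conj (ω 0 Y) - ω 0 Y * conj (ω 0 X))
          + (ω 1 X * ω 2 Y - ω 1 Y * ω 2 X) + (ω 1 X * conj (ω 2 Y) - ω 1 Y * conj (ω 2 X))) := by
      intro X Y
      have h := d3 X Y
      simp only [dd, w2, cF, Complex.ofReal_zero, Complex.ofReal_one, Complex.ofReal_neg, mul_zero, zero_mul,
        add_zero, zero_add, one_mul] at h
      linear_combination -h
    have hinj : ∀ X : g, (∀ k, ω k X = 0) → X = 0 := by
      intro X hX
      exact hbij.injective (by funext k; simp [hX k])
    have hΩeval : ∀ (k : Fin 4) (X Y : g),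
        Ω k ((1:ℂ) ⊗ₜ[ℝ] X + Complex.I ⊗ₜ[ℝ] Y) = ω k X + Complex.I * ω k Y := by
      intro k X Y
      rw [map_add, tmul_I_eq, map_smul, hΩ, hΩ, smul_eq_mul]
    have hΩbeval : ∀ (k : Fin 4) (X Y : g),
        Ωb k ((1:ℂ) ⊗ₜ[ℝ] X + Complex.I ⊗ₜ[ℝ] Y) = conj (ω k X) + Complex.I * conj (ω k Y) := by
      intro k X Y
      rw [map_add, tmul_I_eq, map_smul, hΩb, hΩb, smul_eq_mul]
    choose xx yy hxy using fun j => decompAux (Z j)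
    choose xb yb hxb using fun j => decompAux (Zb j)
    have cval : ∀ (p j : Fin 4),
        ω p (xx j) = (if p = j then 1 else 0)/2 ∧
        ω p (yy j) = -Complex.I * (if p = j then 1 else 0)/2 ∧
        ω p (xb j) = (if p = j then 1 else 0)/2 ∧
        ω p (yb j) = Complex.I * (if p = j then 1 else 0)/2 := by
      intro p j
      have e1 : ω p (xx j) + Complex.I * ω p (yy j) = if p = j then 1 else 0 := by
        rw [← hΩeval, ← hxy j]; exact hZ p j
      have e2 : conj (ω p (xx j)) + Complex.I * conj (ω p (yy j)) = 0 := by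
        rw [← hΩbeval, ← hxy j]; exact hZ' p j
      have e2' : ω p (xx j) - Complex.I * ω p (yy j) = 0 := by
        have h := congrArg conj e2
        simp only [map_add, map_mul, Complex.conj_conj, Complex.conj_I, map_zero] at h
        linear_combination h
      have e3 : ω p (xb j) + Complex.I * ω p (yb j) = 0 := by
        rw [← hΩeval, ← hxb j]; exact hZb p j
      have e4 : conj (ω p (xb j)) + Complex.I * conj (ω p (yb j)) = if p = j then 1 else 0 := by
        rw [← hΩbeval, ← hxb j]; exact hZb' p j
      have e4' : ω p (xb j) - Complex.I * ω p (yb j) = if p = j then 1 else 0 := by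
        have h := congrArg conj e4
        simp only [map_add, map_mul, Complex.conj_conj, Complex.conj_I, map_zero,
          apply_ite conj, map_one] at h
        linear_combination h
      refine ⟨by linear_combination (e1 + e2')/2, by linear_combination (Complex.I/2) * (e2' - e1) + (ω p (yy j)) * Complex.I_sq,
        by linear_combination (e3 + e4')/2, by linear_combination (-Complex.I/2) * (e3 - e4') + (ω p (yb j)) * Complex.I_sq⟩
    have hvx : ∀ p j, ω p (xx j) = (if p = j then 1 else 0)/2 := fun p j => (cval p j).1
    have hvy : ∀ p j, ω p (yy j) = -Complex.I * (if p = j then 1 else 0)/2 := fun p j => (cval p j).2.1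
    have hvxb : ∀ p j, ω p (xb j) = (if p = j then 1 else 0)/2 := fun p j => (cval p j).2.2.1
    have hvyb : ∀ p j, ω p (yb j) = Complex.I * (if p = j then 1 else 0)/2 := fun p j => (cval p j).2.2.2
    have hbrkt : ∀ X Y X' Y' : g,
        ⁅(1:ℂ) ⊗ₜ[ℝ] X + Complex.I ⊗ₜ[ℝ] Y, (1:ℂ) ⊗ₜ[ℝ] X' + Complex.I ⊗ₜ[ℝ] Y'⁆ =
          (1:ℂ) ⊗ₜ[ℝ] ⁅X, X'⁆ + Complex.I ⊗ₜ[ℝ] ⁅X, Y'⁆ + Complex.I ⊗ₜ[ℝ] ⁅Y, X'⁆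
            - (1:ℂ) ⊗ₜ[ℝ] ⁅Y, Y'⁆ := by
      intro X Y X' Y'
      simp only [lie_add, add_lie, LieAlgebra.ExtendScalars.bracket_tmul, one_mul, mul_one,
        Complex.I_mul_I]
      rw [show ((-1:ℂ)) ⊗ₜ[ℝ] ⁅Y, Y'⁆ = -((1:ℂ) ⊗ₜ[ℝ] ⁅Y, Y'⁆) by rw [← TensorProduct.neg_tmul]]
      abel
    have hcomp : ∀ (k : Fin 4) (X Y X' Y' : g),
        Ω k ⁅(1:ℂ) ⊗ₜ[ℝ] X + Complex.I ⊗ₜ[ℝ] Y, (1:ℂ) ⊗ₜ[ℝ] X' + Complex.I ⊗ₜ[ℝ] Y'⁆ =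
          ω k ⁅X, X'⁆ + Complex.I * ω k ⁅X, Y'⁆ + Complex.I * ω k ⁅Y, X'⁆ - ω k ⁅Y, Y'⁆ := by
      intro k X Y X' Y'
      rw [hbrkt]
      simp only [map_add, map_sub, tmul_I_eq, map_smul, smul_eq_mul, hΩ]
    have hcompb : ∀ (k : Fin 4) (X Y X' Y' : g),
        Ωb k ⁅(1:ℂ) ⊗ₜ[ℝ] X + Complex.I ⊗ₜ[ℝ] Y, (1:ℂ) ⊗ₜ[ℝ] X' + Complex.I ⊗ₜ[ℝ] Y'⁆ =
          conj (ω k ⁅X, X'⁆) + Complex.I * conj (ω k ⁅X, Y'⁆) + Complex.I * conj (ω k ⁅Y, X'⁆)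
            - conj (ω k ⁅Y, Y'⁆) := by
      intro k X Y X' Y'
      rw [hbrkt]
      simp only [map_add, map_sub, tmul_I_eq, map_smul, smul_eq_mul, hΩb]
    have hB0 : ∀ U V : ℂ ⊗[ℝ] g, Ω 0 ⁅U, V⁆ = 0 := by
      intro U V
      obtain ⟨X, Y, rfl⟩ := decompAux U
      obtain ⟨X', Y', rfl⟩ := decompAux V
      rw [hcomp]
      simp [s0]
    have hB1 : ∀ U V : ℂ ⊗[ℝ] g, Ω 1 ⁅U, V⁆ = -(Ω 0 U * Ω 2 V - Ω 0 V * Ω 2 U) - (Ω 0 U * Ωb 2 V - Ω 0 V * Ωb 2 U) := by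
      intro U V
      obtain ⟨X, Y, rfl⟩ := decompAux U
      obtain ⟨X', Y', rfl⟩ := decompAux V
      rw [hcomp]
      simp only [s1, hΩeval, hΩbeval]
      ring_nf
      all_goals try simp only [Complex.I_sq, hI3, hI4]
      all_goals try ring
    have hB2 : ∀ U V : ℂ ⊗[ℝ] g, Ω 2 ⁅U, V⁆ = -(Complex.I * (1:ℂ) * (Ω 0 U * Ωb 1 V - Ω 0 V * Ωb 1 U) - Complex.I * (1:ℂ) * (Ω 1 U * Ωb 0 V - Ω 1 V * Ωb 0 U)) := by
      intro U V
      obtain ⟨X, Y, rfl⟩ := decompAux U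
      obtain ⟨X', Y', rfl⟩ := decompAux V
      rw [hcomp]
      simp only [s2, hΩeval, hΩbeval]
      ring_nf
      all_goals try simp only [Complex.I_sq, hI3, hI4]
      all_goals try ring
    have hB3 : ∀ U V : ℂ ⊗[ℝ] g, Ω 3 ⁅U, V⁆ = -((a:ℂ) * (Ω 0 U * Ω 1 V - Ω 0 V * Ω 1 U) + B * (Ω 0 U * Ωb 0 V - Ω 0 V * Ωb 0 U) + (Ω 1 U * Ω 2 V - Ω 1 V * Ω 2 U) + (Ω 1 U * Ωb 2 V - Ω 1 V * Ωb 2 U)) := by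
      intro U V
      obtain ⟨X, Y, rfl⟩ := decompAux U
      obtain ⟨X', Y', rfl⟩ := decompAux V
      rw [hcomp]
      simp only [s3, hΩeval, hΩbeval]
      ring_nf
      all_goals try simp only [Complex.I_sq, hI3, hI4]
      all_goals try ring
    have hBb0 : ∀ U V : ℂ ⊗[ℝ] g, Ωb 0 ⁅U, V⁆ = 0 := by
      intro U V
      obtain ⟨X, Y, rfl⟩ := decompAux U
      obtain ⟨X', Y', rfl⟩ := decompAux V
      rw [hcompb]
      simp [s0]
    have hBb1 : ∀ U V : ℂ ⊗[ℝ] g, Ωb 1 ⁅U, V⁆ = -(Ωb 0 U * Ωb 2 V - Ωb 0 V * Ωb 2 U) - (Ωb 0 U * Ω 2 V - Ωb 0 V * Ω 2 U) := by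
      intro U V
      obtain ⟨X, Y, rfl⟩ := decompAux U
      obtain ⟨X', Y', rfl⟩ := decompAux V
      rw [hcompb]
      simp only [s1, map_add, map_sub, map_mul, map_neg, map_one, Complex.conj_conj, Complex.conj_I, Complex.conj_ofReal, hΩeval, hΩbeval]
      ring_nf
      all_goals try simp only [Complex.I_sq, hI3, hI4]
      all_goals try ring
    have hBb2 : ∀ U V : ℂ ⊗[ℝ] g, Ωb 2 ⁅U, V⁆ = -(-(Complex.I * (1:ℂ)) * (Ωb 0 U * Ω 1 V - Ωb 0 V * Ω 1 U) + Complex.I * (1:ℂ) * (Ωb 1 U * Ω 0 V - Ωb 1 V * Ω 0 U)) := by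
      intro U V
      obtain ⟨X, Y, rfl⟩ := decompAux U
      obtain ⟨X', Y', rfl⟩ := decompAux V
      rw [hcompb]
      simp only [s2, map_add, map_sub, map_mul, map_neg, map_one, Complex.conj_conj, Complex.conj_I, Complex.conj_ofReal, hΩeval, hΩbeval]
      ring_nf
      all_goals try simp only [Complex.I_sq, hI3, hI4]
      all_goals try ring
    have hBb3 : ∀ U V : ℂ ⊗[ℝ] g, Ωb 3 ⁅U, V⁆ = -((a:ℂ) * (Ωb 0 U * Ωb 1 V - Ωb 0 V * Ωb 1 U) + conj B * (Ωb 0 U * Ω 0 V - Ωb 0 V * Ω 0 U) + (Ωb 1 U * Ωb 2 V - Ωb 1 V * Ωb 2 U) + (Ωb 1 U * Ω 2 V - Ωb 1 V * Ω 2 U)) := by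
      intro U V
      obtain ⟨X, Y, rfl⟩ := decompAux U
      obtain ⟨X', Y', rfl⟩ := decompAux V
      rw [hcompb]
      simp only [s3, map_add, map_sub, map_mul, map_neg, map_one, Complex.conj_conj, Complex.conj_I, Complex.conj_ofReal, hΩeval, hΩbeval]
      ring_nf
      all_goals try simp only [Complex.I_sq, hI3, hI4]
      all_goals try ring
    have hzero : ∀ V : ℂ ⊗[ℝ] g, (∀ k, Ω k V = 0) → (∀ k, Ωb k V = 0) → V = 0 := by
      intro V h1 h2
      obtain ⟨X, Y, rfl⟩ := decompAux V
      have e1 : ∀ k : Fin 4, ω k X + Complex.I * ω k Y = 0 := by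
        intro k; rw [← hΩeval]; exact h1 k
      have e2 : ∀ k : Fin 4, ω k X - Complex.I * ω k Y = 0 := by
        intro k
        have hh : conj (ω k X) + Complex.I * conj (ω k Y) = 0 := by
          rw [← hΩbeval]; exact h2 k
        have h3 := congrArg conj hh
        simp only [map_add, map_mul, Complex.conj_conj, Complex.conj_I, map_zero] at h3
        linear_combination h3
      have hX : X = 0 := hinj X (fun k => by linear_combination (e1 k + e2 k)/2)
      have hY : Y = 0 := hinj Y (fun k => by linear_combination (-Complex.I/2) * (e1 k - e2 k) + (ω k Y) * Complex.I_sq)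
      rw [hX, hY]
      simp
    have hspan : ∀ V : ℂ ⊗[ℝ] g,
        V = (∑ k, Ω k V • Z k) + (∑ k, Ωb k V • Zb k) := by
      intro V
      have h1 : ∀ k, Ω k (V - ((∑ k, Ω k V • Z k) + (∑ k, Ωb k V • Zb k))) = 0 := by
        intro k
        fin_cases k <;>
          simp [map_sub, map_sum, map_smul, smul_eq_mul, Fin.sum_univ_four, hZ, hZ', hZb, hZb']
      have h2 : ∀ k, Ωb k (V - ((∑ k, Ω k V • Z k) + (∑ k, Ωb k V • Zb k))) = 0 := by
        intro k
        fin_cases k <;>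
          simp [map_sub, map_sum, map_smul, smul_eq_mul, Fin.sum_univ_four, hZ, hZ', hZb, hZb']
      exact sub_eq_zero.mp (hzero _ h1 h2)
    have hGsum : ∀ V C : ℂ ⊗[ℝ] g,
        G V C = (∑ k, Ω k V * G (Z k) C) + (∑ k, Ωb k V * G (Zb k) C) := by
      intro V C
      conv_lhs => rw [hspan V]
      simp [map_add, map_sum, map_smul, LinearMap.add_apply, LinearMap.coe_sum,
        Finset.sum_apply, LinearMap.smul_apply, smul_eq_mul]
    have gZZ : ∀ j k : Fin 4, G (Z j) (Z k) = (0:ℂ) := by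
      intro j k
      fin_cases j <;> fin_cases k <;>
        simp only [hxy, hxb, tmul_I_eq, map_add, map_smul, LinearMap.add_apply,
          LinearMap.smul_apply, smul_eq_mul, hG, hF]
      all_goals simp [pkFundForm, w2, cF, hJ10, hvx, hvy, hvxb, hvyb, map_div₀, map_ofNat,
        Complex.conj_I, gramM]
      all_goals try simp [Complex.ext_iff]
      all_goals try constructor
      all_goals try ring_nf
      all_goals try ring
      all_goals try norm_num
    have gbb : ∀ j k : Fin 4, G (Zb j) (Zb k) = (0:ℂ) := by
      intro j k
      fin_cases j <;> fin_cases k <;>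
        simp only [hxy, hxb, tmul_I_eq, map_add, map_smul, LinearMap.add_apply,
          LinearMap.smul_apply, smul_eq_mul, hG, hF]
      all_goals simp [pkFundForm, w2, cF, hJ10, hvx, hvy, hvxb, hvyb, map_div₀, map_ofNat,
        Complex.conj_I, gramM]
      all_goals try simp [Complex.ext_iff]
      all_goals try constructor
      all_goals try ring_nf
      all_goals try ring
      all_goals try norm_num
    have gZb : ∀ j k : Fin 4, G (Z j) (Zb k) = gramM (1:ℝ) a r s u v j k := by
      intro j k
      fin_cases j <;> fin_cases k <;>
        simp only [hxy, hxb, tmul_I_eq, map_add, map_smul, LinearMap.add_apply,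
          LinearMap.smul_apply, smul_eq_mul, hG, hF]
      all_goals simp [pkFundForm, w2, cF, hJ10, hvx, hvy, hvxb, hvyb, map_div₀, map_ofNat,
        Complex.conj_I, gramM]
      all_goals try simp [Complex.ext_iff]
      all_goals try constructor
      all_goals try ring_nf
      all_goals try ring
      all_goals try norm_num
    have gbZ : ∀ j k : Fin 4, G (Zb j) (Z k) = gramM (1:ℝ) a r s u v k j := by
      intro j k
      fin_cases j <;> fin_cases k <;>
        simp only [hxy, hxb, tmul_I_eq, map_add, map_smul, LinearMap.add_apply,
          LinearMap.smul_apply, smul_eq_mul, hG, hF]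
      all_goals simp [pkFundForm, w2, cF, hJ10, hvx, hvy, hvxb, hvyb, map_div₀, map_ofNat,
        Complex.conj_I, gramM]
      all_goals try simp [Complex.ext_iff]
      all_goals try constructor
      all_goals try ring_nf
      all_goals try ring
      all_goals try norm_num
    have wpZ0 : G (nabla (Zb 0) (Z 1)) (Z 0) = 0 := by
      refine mul_left_cancel₀ (show (2:ℂ) ≠ 0 by norm_num) ?_
      rw [hKoszul (Zb 0) (Z 1) (Z 0), hGsum ⁅(Zb 0), (Z 1)⁆ (Z 0), hGsum ⁅(Z 1), (Z 0)⁆ (Zb 0),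
        hGsum ⁅(Z 0), (Zb 0)⁆ (Z 1)]
      simp only [Fin.sum_univ_four, hB0, hB1, hB2, hB3, hBb0, hBb1, hBb2, hBb3, hZ, hZ', hZb,
        hZb', gZZ, gbb, gZb, gbZ, gramM,
        Fin.reduceEq, reduceIte, Complex.ofReal_one, Complex.ofReal_neg, Complex.ofReal_zero,
        mul_zero, zero_mul, mul_one, one_mul, add_zero, zero_add,
        neg_zero, sub_zero, zero_sub, sub_self, mul_neg, neg_mul, neg_neg]
      all_goals try simp [Complex.ext_iff]
      all_goals try constructor
      all_goals try ring_nf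
      all_goals try ring
      all_goals try norm_num
    have wpZ1 : G (nabla (Zb 0) (Z 1)) (Z 1) = 0 := by
      refine mul_left_cancel₀ (show (2:ℂ) ≠ 0 by norm_num) ?_
      rw [hKoszul (Zb 0) (Z 1) (Z 1), hGsum ⁅(Zb 0), (Z 1)⁆ (Z 1), hGsum ⁅(Z 1), (Z 1)⁆ (Zb 0),
        hGsum ⁅(Z 1), (Zb 0)⁆ (Z 1)]
      simp only [Fin.sum_univ_four, hB0, hB1, hB2, hB3, hBb0, hBb1, hBb2, hBb3, hZ, hZ', hZb,
        hZb', gZZ, gbb, gZb, gbZ, gramM,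
        Fin.reduceEq, reduceIte, Complex.ofReal_one, Complex.ofReal_neg, Complex.ofReal_zero,
        mul_zero, zero_mul, mul_one, one_mul, add_zero, zero_add,
        neg_zero, sub_zero, zero_sub, sub_self, mul_neg, neg_mul, neg_neg]
      all_goals try simp [Complex.ext_iff]
      all_goals try constructor
      all_goals try ring_nf
      all_goals try ring
      all_goals try norm_num
    have wpZ2 : G (nabla (Zb 0) (Z 1)) (Z 2) = 0 := by
      refine mul_left_cancel₀ (show (2:ℂ) ≠ 0 by norm_num) ?_
      rw [hKoszul (Zb 0) (Z 1) (Z 2), hGsum ⁅(Zb 0), (Z 1)⁆ (Z 2), hGsum ⁅(Z 1), (Z 2)⁆ (Zb 0),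
        hGsum ⁅(Z 2), (Zb 0)⁆ (Z 1)]
      simp only [Fin.sum_univ_four, hB0, hB1, hB2, hB3, hBb0, hBb1, hBb2, hBb3, hZ, hZ', hZb,
        hZb', gZZ, gbb, gZb, gbZ, gramM,
        Fin.reduceEq, reduceIte, Complex.ofReal_one, Complex.ofReal_neg, Complex.ofReal_zero,
        mul_zero, zero_mul, mul_one, one_mul, add_zero, zero_add,
        neg_zero, sub_zero, zero_sub, sub_self, mul_neg, neg_mul, neg_neg]
      all_goals try simp [Complex.ext_iff]
      all_goals try constructor
      all_goals try ring_nf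
      all_goals try ring
      all_goals try norm_num
    have wpZ3 : G (nabla (Zb 0) (Z 1)) (Z 3) = 0 := by
      refine mul_left_cancel₀ (show (2:ℂ) ≠ 0 by norm_num) ?_
      rw [hKoszul (Zb 0) (Z 1) (Z 3), hGsum ⁅(Zb 0), (Z 1)⁆ (Z 3), hGsum ⁅(Z 1), (Z 3)⁆ (Zb 0),
        hGsum ⁅(Z 3), (Zb 0)⁆ (Z 1)]
      simp only [Fin.sum_univ_four, hB0, hB1, hB2, hB3, hBb0, hBb1, hBb2, hBb3, hZ, hZ', hZb,
        hZb', gZZ, gbb, gZb, gbZ, gramM,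
        Fin.reduceEq, reduceIte, Complex.ofReal_one, Complex.ofReal_neg, Complex.ofReal_zero,
        mul_zero, zero_mul, mul_one, one_mul, add_zero, zero_add,
        neg_zero, sub_zero, zero_sub, sub_self, mul_neg, neg_mul, neg_neg]
      all_goals try simp [Complex.ext_iff]
      all_goals try constructor
      all_goals try ring_nf
      all_goals try ring
      all_goals try norm_num
    have wpZb1 : G (nabla (Zb 0) (Z 1)) (Zb 1) = 0 := by
      refine mul_left_cancel₀ (show (2:ℂ) ≠ 0 by norm_num) ?_
      rw [hKoszul (Zb 0) (Z 1) (Zb 1), hGsum ⁅(Zb 0), (Z 1)⁆ (Zb 1), hGsum ⁅(Z 1), (Zb 1)⁆ (Zb 0),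
        hGsum ⁅(Zb 1), (Zb 0)⁆ (Z 1)]
      simp only [Fin.sum_univ_four, hB0, hB1, hB2, hB3, hBb0, hBb1, hBb2, hBb3, hZ, hZ', hZb,
        hZb', gZZ, gbb, gZb, gbZ, gramM,
        Fin.reduceEq, reduceIte, Complex.ofReal_one, Complex.ofReal_neg, Complex.ofReal_zero,
        mul_zero, zero_mul, mul_one, one_mul, add_zero, zero_add,
        neg_zero, sub_zero, zero_sub, sub_self, mul_neg, neg_mul, neg_neg]
      all_goals try simp [Complex.ext_iff]
      all_goals try constructor
      all_goals try ring_nf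
      all_goals try ring
      all_goals try norm_num
    have wpZb3 : G (nabla (Zb 0) (Z 1)) (Zb 3) = 0 := by
      refine mul_left_cancel₀ (show (2:ℂ) ≠ 0 by norm_num) ?_
      rw [hKoszul (Zb 0) (Z 1) (Zb 3), hGsum ⁅(Zb 0), (Z 1)⁆ (Zb 3), hGsum ⁅(Z 1), (Zb 3)⁆ (Zb 0),
        hGsum ⁅(Zb 3), (Zb 0)⁆ (Z 1)]
      simp only [Fin.sum_univ_four, hB0, hB1, hB2, hB3, hBb0, hBb1, hBb2, hBb3, hZ, hZ', hZb,
        hZb', gZZ, gbb, gZb, gbZ, gramM,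
        Fin.reduceEq, reduceIte, Complex.ofReal_one, Complex.ofReal_neg, Complex.ofReal_zero,
        mul_zero, zero_mul, mul_one, one_mul, add_zero, zero_add,
        neg_zero, sub_zero, zero_sub, sub_self, mul_neg, neg_mul, neg_neg]
      all_goals try simp [Complex.ext_iff]
      all_goals try constructor
      all_goals try ring_nf
      all_goals try ring
      all_goals try norm_num
    have wpZb0 : G (nabla (Zb 0) (Z 1)) (Zb 0) = Complex.I * (a:ℂ) * ((r:ℂ) + Complex.I*(s:ℂ)) := by
      refine mul_left_cancel₀ (show (2:ℂ) ≠ 0 by norm_num) ?_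
      rw [hKoszul (Zb 0) (Z 1) (Zb 0), hGsum ⁅(Zb 0), (Z 1)⁆ (Zb 0), hGsum ⁅(Z 1), (Zb 0)⁆ (Zb 0),
        hGsum ⁅(Zb 0), (Zb 0)⁆ (Z 1)]
      simp only [Fin.sum_univ_four, hB0, hB1, hB2, hB3, hBb0, hBb1, hBb2, hBb3, hZ, hZ', hZb,
        hZb', gZZ, gbb, gZb, gbZ, gramM,
        Fin.reduceEq, reduceIte, Complex.ofReal_one, Complex.ofReal_neg, Complex.ofReal_zero,
        mul_zero, zero_mul, mul_one, one_mul, add_zero, zero_add,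
        neg_zero, sub_zero, zero_sub, sub_self, mul_neg, neg_mul, neg_neg]
      all_goals try simp [Complex.ext_iff]
      all_goals try constructor
      all_goals try ring_nf
      all_goals try ring
      all_goals try norm_num
    have wpZb2 : G (nabla (Zb 0) (Z 1)) (Zb 2) = -(Complex.I * (r:ℂ)) := by
      refine mul_left_cancel₀ (show (2:ℂ) ≠ 0 by norm_num) ?_
      rw [hKoszul (Zb 0) (Z 1) (Zb 2), hGsum ⁅(Zb 0), (Z 1)⁆ (Zb 2), hGsum ⁅(Z 1), (Zb 2)⁆ (Zb 0),
        hGsum ⁅(Zb 2), (Zb 0)⁆ (Z 1)]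
      simp only [Fin.sum_univ_four, hB0, hB1, hB2, hB3, hBb0, hBb1, hBb2, hBb3, hZ, hZ', hZb,
        hZb', gZZ, gbb, gZb, gbZ, gramM,
        Fin.reduceEq, reduceIte, Complex.ofReal_one, Complex.ofReal_neg, Complex.ofReal_zero,
        mul_zero, zero_mul, mul_one, one_mul, add_zero, zero_add,
        neg_zero, sub_zero, zero_sub, sub_self, mul_neg, neg_mul, neg_neg]
      all_goals try simp [Complex.ext_iff]
      all_goals try constructor
      all_goals try ring_nf
      all_goals try ring
      all_goals try norm_num
    have wqZ0 : G (nabla (Z 0) (Z 1)) (Z 0) = 0 := by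
      refine mul_left_cancel₀ (show (2:ℂ) ≠ 0 by norm_num) ?_
      rw [hKoszul (Z 0) (Z 1) (Z 0), hGsum ⁅(Z 0), (Z 1)⁆ (Z 0), hGsum ⁅(Z 1), (Z 0)⁆ (Z 0),
        hGsum ⁅(Z 0), (Z 0)⁆ (Z 1)]
      simp only [Fin.sum_univ_four, hB0, hB1, hB2, hB3, hBb0, hBb1, hBb2, hBb3, hZ, hZ', hZb,
        hZb', gZZ, gbb, gZb, gbZ, gramM,
        Fin.reduceEq, reduceIte, Complex.ofReal_one, Complex.ofReal_neg, Complex.ofReal_zero,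
        mul_zero, zero_mul, mul_one, one_mul, add_zero, zero_add,
        neg_zero, sub_zero, zero_sub, sub_self, mul_neg, neg_mul, neg_neg]
      all_goals try simp [Complex.ext_iff]
      all_goals try constructor
      all_goals try ring_nf
      all_goals try ring
      all_goals try norm_num
    have wqZ1 : G (nabla (Z 0) (Z 1)) (Z 1) = 0 := by
      refine mul_left_cancel₀ (show (2:ℂ) ≠ 0 by norm_num) ?_
      rw [hKoszul (Z 0) (Z 1) (Z 1), hGsum ⁅(Z 0), (Z 1)⁆ (Z 1), hGsum ⁅(Z 1), (Z 1)⁆ (Z 0),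
        hGsum ⁅(Z 1), (Z 0)⁆ (Z 1)]
      simp only [Fin.sum_univ_four, hB0, hB1, hB2, hB3, hBb0, hBb1, hBb2, hBb3, hZ, hZ', hZb,
        hZb', gZZ, gbb, gZb, gbZ, gramM,
        Fin.reduceEq, reduceIte, Complex.ofReal_one, Complex.ofReal_neg, Complex.ofReal_zero,
        mul_zero, zero_mul, mul_one, one_mul, add_zero, zero_add,
        neg_zero, sub_zero, zero_sub, sub_self, mul_neg, neg_mul, neg_neg]
      all_goals try simp [Complex.ext_iff]
      all_goals try constructor
      all_goals try ring_nf
      all_goals try ring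
      all_goals try norm_num
    have wqZ2 : G (nabla (Z 0) (Z 1)) (Z 2) = 0 := by
      refine mul_left_cancel₀ (show (2:ℂ) ≠ 0 by norm_num) ?_
      rw [hKoszul (Z 0) (Z 1) (Z 2), hGsum ⁅(Z 0), (Z 1)⁆ (Z 2), hGsum ⁅(Z 1), (Z 2)⁆ (Z 0),
        hGsum ⁅(Z 2), (Z 0)⁆ (Z 1)]
      simp only [Fin.sum_univ_four, hB0, hB1, hB2, hB3, hBb0, hBb1, hBb2, hBb3, hZ, hZ', hZb,
        hZb', gZZ, gbb, gZb, gbZ, gramM,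
        Fin.reduceEq, reduceIte, Complex.ofReal_one, Complex.ofReal_neg, Complex.ofReal_zero,
        mul_zero, zero_mul, mul_one, one_mul, add_zero, zero_add,
        neg_zero, sub_zero, zero_sub, sub_self, mul_neg, neg_mul, neg_neg]
      all_goals try simp [Complex.ext_iff]
      all_goals try constructor
      all_goals try ring_nf
      all_goals try ring
      all_goals try norm_num
    have wqZ3 : G (nabla (Z 0) (Z 1)) (Z 3) = 0 := by
      refine mul_left_cancel₀ (show (2:ℂ) ≠ 0 by norm_num) ?_
      rw [hKoszul (Z 0) (Z 1) (Z 3), hGsum ⁅(Z 0), (Z 1)⁆ (Z 3), hGsum ⁅(Z 1), (Z 3)⁆ (Z 0),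
        hGsum ⁅(Z 3), (Z 0)⁆ (Z 1)]
      simp only [Fin.sum_univ_four, hB0, hB1, hB2, hB3, hBb0, hBb1, hBb2, hBb3, hZ, hZ', hZb,
        hZb', gZZ, gbb, gZb, gbZ, gramM,
        Fin.reduceEq, reduceIte, Complex.ofReal_one, Complex.ofReal_neg, Complex.ofReal_zero,
        mul_zero, zero_mul, mul_one, one_mul, add_zero, zero_add,
        neg_zero, sub_zero, zero_sub, sub_self, mul_neg, neg_mul, neg_neg]
      all_goals try simp [Complex.ext_iff]
      all_goals try constructor
      all_goals try ring_nf
      all_goals try ring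
      all_goals try norm_num
    have wqZb0 : G (nabla (Z 0) (Z 1)) (Zb 0) = 0 := by
      refine mul_left_cancel₀ (show (2:ℂ) ≠ 0 by norm_num) ?_
      rw [hKoszul (Z 0) (Z 1) (Zb 0), hGsum ⁅(Z 0), (Z 1)⁆ (Zb 0), hGsum ⁅(Z 1), (Zb 0)⁆ (Z 0),
        hGsum ⁅(Zb 0), (Z 0)⁆ (Z 1)]
      simp only [Fin.sum_univ_four, hB0, hB1, hB2, hB3, hBb0, hBb1, hBb2, hBb3, hZ, hZ', hZb,
        hZb', gZZ, gbb, gZb, gbZ, gramM,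
        Fin.reduceEq, reduceIte, Complex.ofReal_one, Complex.ofReal_neg, Complex.ofReal_zero,
        mul_zero, zero_mul, mul_one, one_mul, add_zero, zero_add,
        neg_zero, sub_zero, zero_sub, sub_self, mul_neg, neg_mul, neg_neg]
      all_goals try simp [Complex.ext_iff]
      all_goals try constructor
      all_goals try ring_nf
      all_goals try ring
      all_goals try norm_num
    have wqZb1 : G (nabla (Z 0) (Z 1)) (Zb 1) = 0 := by
      refine mul_left_cancel₀ (show (2:ℂ) ≠ 0 by norm_num) ?_
      rw [hKoszul (Z 0) (Z 1) (Zb 1), hGsum ⁅(Z 0), (Z 1)⁆ (Zb 1), hGsum ⁅(Z 1), (Zb 1)⁆ (Z 0),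
        hGsum ⁅(Zb 1), (Z 0)⁆ (Z 1)]
      simp only [Fin.sum_univ_four, hB0, hB1, hB2, hB3, hBb0, hBb1, hBb2, hBb3, hZ, hZ', hZb,
        hZb', gZZ, gbb, gZb, gbZ, gramM,
        Fin.reduceEq, reduceIte, Complex.ofReal_one, Complex.ofReal_neg, Complex.ofReal_zero,
        mul_zero, zero_mul, mul_one, one_mul, add_zero, zero_add,
        neg_zero, sub_zero, zero_sub, sub_self, mul_neg, neg_mul, neg_neg]
      all_goals try simp [Complex.ext_iff]
      all_goals try constructor
      all_goals try ring_nf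
      all_goals try ring
      all_goals try norm_num
    have wqZb2 : G (nabla (Z 0) (Z 1)) (Zb 2) = 0 := by
      refine mul_left_cancel₀ (show (2:ℂ) ≠ 0 by norm_num) ?_
      rw [hKoszul (Z 0) (Z 1) (Zb 2), hGsum ⁅(Z 0), (Z 1)⁆ (Zb 2), hGsum ⁅(Z 1), (Zb 2)⁆ (Z 0),
        hGsum ⁅(Zb 2), (Z 0)⁆ (Z 1)]
      simp only [Fin.sum_univ_four, hB0, hB1, hB2, hB3, hBb0, hBb1, hBb2, hBb3, hZ, hZ', hZb,
        hZb', gZZ, gbb, gZb, gbZ, gramM,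
        Fin.reduceEq, reduceIte, Complex.ofReal_one, Complex.ofReal_neg, Complex.ofReal_zero,
        mul_zero, zero_mul, mul_one, one_mul, add_zero, zero_add,
        neg_zero, sub_zero, zero_sub, sub_self, mul_neg, neg_mul, neg_neg]
      all_goals try simp [Complex.ext_iff]
      all_goals try constructor
      all_goals try ring_nf
      all_goals try ring
      all_goals try norm_num
    have wqZb3 : G (nabla (Z 0) (Z 1)) (Zb 3) = 0 := by
      refine mul_left_cancel₀ (show (2:ℂ) ≠ 0 by norm_num) ?_
      rw [hKoszul (Z 0) (Z 1) (Zb 3), hGsum ⁅(Z 0), (Z 1)⁆ (Zb 3), hGsum ⁅(Z 1), (Zb 3)⁆ (Z 0),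
        hGsum ⁅(Zb 3), (Z 0)⁆ (Z 1)]
      simp only [Fin.sum_univ_four, hB0, hB1, hB2, hB3, hBb0, hBb1, hBb2, hBb3, hZ, hZ', hZb,
        hZb', gZZ, gbb, gZb, gbZ, gramM,
        Fin.reduceEq, reduceIte, Complex.ofReal_one, Complex.ofReal_neg, Complex.ofReal_zero,
        mul_zero, zero_mul, mul_one, one_mul, add_zero, zero_add,
        neg_zero, sub_zero, zero_sub, sub_self, mul_neg, neg_mul, neg_neg]
      all_goals try simp [Complex.ext_iff]
      all_goals try constructor
      all_goals try ring_nf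
      all_goals try ring
      all_goals try norm_num
    have hval1 : G (nabla (Z 0) (Z 2)) (Zb 1) = -(Complex.I * (r:ℂ)) := by
      refine mul_left_cancel₀ (show (2:ℂ) ≠ 0 by norm_num) ?_
      rw [hKoszul (Z 0) (Z 2) (Zb 1), hGsum ⁅(Z 0), (Z 2)⁆ (Zb 1), hGsum ⁅(Z 2), (Zb 1)⁆ (Z 0),
        hGsum ⁅(Zb 1), (Z 0)⁆ (Z 2)]
      simp only [Fin.sum_univ_four, hB0, hB1, hB2, hB3, hBb0, hBb1, hBb2, hBb3, hZ, hZ', hZb,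
        hZb', gZZ, gbb, gZb, gbZ, gramM,
        Fin.reduceEq, reduceIte, Complex.ofReal_one, Complex.ofReal_neg, Complex.ofReal_zero,
        mul_zero, zero_mul, mul_one, one_mul, add_zero, zero_add,
        neg_zero, sub_zero, zero_sub, sub_self, mul_neg, neg_mul, neg_neg]
      all_goals try simp [Complex.ext_iff]
      all_goals try constructor
      all_goals try ring_nf
      all_goals try ring
      all_goals try norm_num
    have hval3a : G (nabla (Z 3) (Z 1)) (Zb 1) = 0 := by
      refine mul_left_cancel₀ (show (2:ℂ) ≠ 0 by norm_num) ?_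
      rw [hKoszul (Z 3) (Z 1) (Zb 1), hGsum ⁅(Z 3), (Z 1)⁆ (Zb 1), hGsum ⁅(Z 1), (Zb 1)⁆ (Z 3),
        hGsum ⁅(Zb 1), (Z 3)⁆ (Z 1)]
      simp only [Fin.sum_univ_four, hB0, hB1, hB2, hB3, hBb0, hBb1, hBb2, hBb3, hZ, hZ', hZb,
        hZb', gZZ, gbb, gZb, gbZ, gramM,
        Fin.reduceEq, reduceIte, Complex.ofReal_one, Complex.ofReal_neg, Complex.ofReal_zero,
        mul_zero, zero_mul, mul_one, one_mul, add_zero, zero_add,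
        neg_zero, sub_zero, zero_sub, sub_self, mul_neg, neg_mul, neg_neg]
      all_goals try simp [Complex.ext_iff]
      all_goals try constructor
      all_goals try ring_nf
      all_goals try ring
      all_goals try norm_num
    have hval3b : G (nabla (Zb 3) (Z 1)) (Zb 1) = 0 := by
      refine mul_left_cancel₀ (show (2:ℂ) ≠ 0 by norm_num) ?_
      rw [hKoszul (Zb 3) (Z 1) (Zb 1), hGsum ⁅(Zb 3), (Z 1)⁆ (Zb 1), hGsum ⁅(Z 1), (Zb 1)⁆ (Zb 3),
        hGsum ⁅(Zb 1), (Zb 3)⁆ (Z 1)]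
      simp only [Fin.sum_univ_four, hB0, hB1, hB2, hB3, hBb0, hBb1, hBb2, hBb3, hZ, hZ', hZb,
        hZb', gZZ, gbb, gZb, gbZ, gramM,
        Fin.reduceEq, reduceIte, Complex.ofReal_one, Complex.ofReal_neg, Complex.ofReal_zero,
        mul_zero, zero_mul, mul_one, one_mul, add_zero, zero_add,
        neg_zero, sub_zero, zero_sub, sub_self, mul_neg, neg_mul, neg_neg]
      all_goals try simp [Complex.ext_iff]
      all_goals try constructor
      all_goals try ring_nf
      all_goals try ring
      all_goals try norm_num
    have uniq : ∀ V : ℂ ⊗[ℝ] g, (∀ j, G V (Z j) = 0) → (∀ j, G V (Zb j) = 0) → V = 0 := by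
      intro V h1 h2
      have qq : ∀ j : Fin 4,
          (Ω 0 V * G (Z 0) (Z j) + Ω 1 V * G (Z 1) (Z j) + Ω 2 V * G (Z 2) (Z j)
            + Ω 3 V * G (Z 3) (Z j))
          + (Ωb 0 V * G (Zb 0) (Z j) + Ωb 1 V * G (Zb 1) (Z j) + Ωb 2 V * G (Zb 2) (Z j)
            + Ωb 3 V * G (Zb 3) (Z j)) = 0 := by
        intro j
        have h := hGsum V (Z j)
        rw [h1 j] at h
        simp only [Fin.sum_univ_four] at h
        linear_combination -h
      have pp : ∀ j : Fin 4,
          (Ω 0 V * G (Z 0) (Zb j) + Ω 1 V * G (Z 1) (Zb j) + Ω 2 V * G (Z 2) (Zb j)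
            + Ω 3 V * G (Z 3) (Zb j))
          + (Ωb 0 V * G (Zb 0) (Zb j) + Ωb 1 V * G (Zb 1) (Zb j) + Ωb 2 V * G (Zb 2) (Zb j)
            + Ωb 3 V * G (Zb 3) (Zb j)) = 0 := by
        intro j
        have h := hGsum V (Zb j)
        rw [h2 j] at h
        simp only [Fin.sum_univ_four] at h
        linear_combination -h
      have q0 := qq 0
      have q1 := qq 1
      have q2 := qq 2
      have q3 := qq 3
      have p0 := pp 0
      have p1 := pp 1
      have p2 := pp 2
      have p3 := pp 3
      simp only [gZZ, gbb, gZb, gbZ, gramM, Fin.reduceEq, reduceIte,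
        Complex.ofReal_one, Complex.ofReal_neg, Complex.ofReal_zero,
        mul_zero, zero_mul, add_zero, zero_add] at q0 q1 q2 q3 p0 p1 p2 p3
      have b0 : Ωb 0 V = 0 := by
        have hx : Ωb 0 V * (Complex.I * ((r:ℂ) - Complex.I*(s:ℂ))) = 0 := by linear_combination -q3
        rcases mul_eq_zero.mp hx with h | h
        · exact h
        · exact absurd h (mul_ne_zero Complex.I_ne_zero hne1)
      have b1 : Ωb 1 V = 0 := by
        have hx : Ωb 1 V * (s:ℂ) = 0 := by linear_combination q1 + (Complex.I*(v:ℂ)) * b0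
        rcases mul_eq_zero.mp hx with h | h
        · exact h
        · exact absurd h hsC
      have b2 : Ωb 2 V = 0 := by
        have hx : Ωb 2 V * ((1:ℂ)*(r:ℂ)) = 0 := by
          linear_combination q2 + ((a:ℂ)*(1:ℂ)*((r:ℂ) + Complex.I*(s:ℂ))) * b0
        rcases mul_eq_zero.mp hx with h | h
        · exact h
        · exact absurd h hdrC
      have b3 : Ωb 3 V = 0 := by
        have hx : Ωb 3 V * (Complex.I * ((r:ℂ) + Complex.I*(s:ℂ))) = 0 := by
          linear_combination q0 + (u:ℂ) * b0 - (Complex.I*(v:ℂ)) * b1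
            + ((a:ℂ)*(1:ℂ)*((r:ℂ) - Complex.I*(s:ℂ))) * b2
        rcases mul_eq_zero.mp hx with h | h
        · exact h
        · exact absurd h (mul_ne_zero Complex.I_ne_zero hne2)
      have a0 : Ω 0 V = 0 := by
        have hx : Ω 0 V * (Complex.I * ((r:ℂ) + Complex.I*(s:ℂ))) = 0 := by linear_combination p3
        rcases mul_eq_zero.mp hx with h | h
        · exact h
        · exact absurd h (mul_ne_zero Complex.I_ne_zero hne2)
      have a1 : Ω 1 V = 0 := by
        have hx : Ω 1 V * (s:ℂ) = 0 := by linear_combination p1 - (Complex.I*(v:ℂ)) * a0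
        rcases mul_eq_zero.mp hx with h | h
        · exact h
        · exact absurd h hsC
      have a2 : Ω 2 V = 0 := by
        have hx : Ω 2 V * ((1:ℂ)*(r:ℂ)) = 0 := by
          linear_combination p2 + ((a:ℂ)*(1:ℂ)*((r:ℂ) - Complex.I*(s:ℂ))) * a0
        rcases mul_eq_zero.mp hx with h | h
        · exact h
        · exact absurd h hdrC
      have a3 : Ω 3 V = 0 := by
        have hx : Ω 3 V * (Complex.I * ((r:ℂ) - Complex.I*(s:ℂ))) = 0 := by
          linear_combination -p0 - (u:ℂ) * a0 - (Complex.I*(v:ℂ)) * a1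
            - ((a:ℂ)*(1:ℂ)*((r:ℂ) + Complex.I*(s:ℂ))) * a2
        rcases mul_eq_zero.mp hx with h | h
        · exact h
        · exact absurd h (mul_ne_zero Complex.I_ne_zero hne1)
      rw [hspan V, Fin.sum_univ_four, Fin.sum_univ_four, a0, a1, a2, a3, b0, b1, b2, b3]
      simp
    have hWpp : nabla (Z 0) (Z 1) = 0 := by
      refine uniq _ ?_ ?_
      · intro j
        fin_cases j
        exacts [wqZ0, wqZ1, wqZ2, wqZ3]
      · intro j
        fin_cases j
        exacts [wqZb0, wqZb1, wqZb2, wqZb3]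
    have hVp : nabla (Zb 0) (Z 1) + (Complex.I) • Z 2 = 0 := by
      refine uniq _ ?_ ?_
      · intro j
        rw [map_add, LinearMap.add_apply, map_smul, LinearMap.smul_apply, smul_eq_mul]
        fin_cases j <;> simp [wpZ0, wpZ1, wpZ2, wpZ3, gZZ]
      · intro j
        rw [map_add, LinearMap.add_apply, map_smul, LinearMap.smul_apply, smul_eq_mul]
        fin_cases j <;>
          simp [wpZb0, wpZb1, wpZb2, wpZb3, gZb, gramM, Complex.ext_iff]
    have hWp : nabla (Zb 0) (Z 1) = -((Complex.I) • Z 2) := eq_neg_of_add_eq_zero_left hVp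
    have hCvec : ⁅Z 0, Zb 0⁆ = (-B) • Z 3 + (conj B) • Zb 3 := by
      rw [hspan ⁅Z 0, Zb 0⁆, Fin.sum_univ_four, Fin.sum_univ_four]
      simp [hB0, hB1, hB2, hB3, hBb0, hBb1, hBb2, hBb3, hZ, hZ', hZb, hZb']
    refine ⟨?_, ?_⟩
    · rw [hWpp, hWp, hCvec, map_zero]
      simp only [map_add, map_smul, map_neg, map_sub, map_zero, LinearMap.add_apply,
        LinearMap.smul_apply, LinearMap.neg_apply, LinearMap.sub_apply, LinearMap.zero_apply,
        smul_eq_mul, sub_zero]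
      rw [hval1, hval3a, hval3b]
      all_goals try simp [Complex.ext_iff]
      all_goals try constructor
      all_goals try ring_nf
      all_goals try ring
      all_goals try norm_num
    · simpa using hrr
  case inr =>
    have hrr : r ≠ 0 := left_ne_zero_of_mul hrs
    have hss : s ≠ 0 := right_ne_zero_of_mul hrs
    have hrC : (r:ℂ) ≠ 0 := Complex.ofReal_ne_zero.mpr hrr
    have hsC : (s:ℂ) ≠ 0 := Complex.ofReal_ne_zero.mpr hss
    have hne1 : ((r:ℂ) - Complex.I*(s:ℂ)) ≠ 0 := by
      intro h
      apply hrr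
      have := congrArg Complex.re h
      simpa using this
    have hne2 : ((r:ℂ) + Complex.I*(s:ℂ)) ≠ 0 := by
      intro h
      apply hrr
      have := congrArg Complex.re h
      simpa using this
    have hdrC : (-1:ℂ)*(r:ℂ) ≠ 0 := by simpa using hrC
    have hI3 : Complex.I ^ 3 = -Complex.I := by
      have h3 : (3:ℕ) = 2 + 1 := rfl
      rw [h3, pow_add, Complex.I_sq, pow_one]
      ring
    have hI4 : Complex.I ^ 4 = 1 := by
      have h4 : (4:ℕ) = 2 + 2 := rfl
      rw [h4, pow_add, Complex.I_sq]
      ring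
    obtain ⟨hJ10, hbij⟩ := hωb
    unfold PKStarEq StarEq at hse
    obtain ⟨d0, d1, d2, d3⟩ := hse
    have s0 : ∀ X Y : g, ω 0 ⁅X, Y⁆ = 0 := by
      intro X Y
      have h := d0 X Y
      simp only [dd] at h
      exact neg_eq_zero.mp h
    have s1 : ∀ X Y : g, ω 1 ⁅X, Y⁆ =
        -(ω 0 X * ω 2 Y - ω 0 Y * ω 2 X) - (ω 0 X * conj (ω 2 Y) - ω 0 Y * conj (ω 2 X)) := by
      intro X Y
      have h := d1 X Y
      simp only [dd, w2, cF] at h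
      linear_combination -h
    have s2 : ∀ X Y : g, ω 2 ⁅X, Y⁆ =
        -(Complex.I * (-1:ℂ) * (ω 0 X * conj (ω 1 Y) - ω 0 Y * conj (ω 1 X))
          - Complex.I * (-1:ℂ) * (ω 1 X * conj (ω 0 Y) - ω 1 Y * conj (ω 0 X))) := by
      intro X Y
      have h := d2 X Y
      simp only [dd, w2, cF, Complex.ofReal_zero, Complex.ofReal_one, Complex.ofReal_neg, mul_zero, zero_mul,
        add_zero, zero_add] at h
      linear_combination -h
    have s3 : ∀ X Y : g, ω 3 ⁅X, Y⁆ =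
        -((a:ℂ) * (ω 0 X * ω 1 Y - ω 0 Y * ω 1 X)
          + B * (ω 0 X * conj (ω 0 Y) - ω 0 Y * conj (ω 0 X))
          + (ω 1 X * ω 2 Y - ω 1 Y * ω 2 X) + (ω 1 X * conj (ω 2 Y) - ω 1 Y * conj (ω 2 X))) := by
      intro X Y
      have h := d3 X Y
      simp only [dd, w2, cF, Complex.ofReal_zero, Complex.ofReal_one, Complex.ofReal_neg, mul_zero, zero_mul,
        add_zero, zero_add, one_mul] at h
      linear_combination -h
    have hinj : ∀ X : g, (∀ k, ω k X = 0) → X = 0 := by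
      intro X hX
      exact hbij.injective (by funext k; simp [hX k])
    have hΩeval : ∀ (k : Fin 4) (X Y : g),
        Ω k ((1:ℂ) ⊗ₜ[ℝ] X + Complex.I ⊗ₜ[ℝ] Y) = ω k X + Complex.I * ω k Y := by
      intro k X Y
      rw [map_add, tmul_I_eq, map_smul, hΩ, hΩ, smul_eq_mul]
    have hΩbeval : ∀ (k : Fin 4) (X Y : g),
        Ωb k ((1:ℂ) ⊗ₜ[ℝ] X + Complex.I ⊗ₜ[ℝ] Y) = conj (ω k X) + Complex.I * conj (ω k Y) := by
      intro k X Y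
      rw [map_add, tmul_I_eq, map_smul, hΩb, hΩb, smul_eq_mul]
    choose xx yy hxy using fun j => decompAux (Z j)
    choose xb yb hxb using fun j => decompAux (Zb j)
    have cval : ∀ (p j : Fin 4),
        ω p (xx j) = (if p = j then 1 else 0)/2 ∧
        ω p (yy j) = -Complex.I * (if p = j then 1 else 0)/2 ∧
        ω p (xb j) = (if p = j then 1 else 0)/2 ∧
        ω p (yb j) = Complex.I * (if p = j then 1 else 0)/2 := by
      intro p j
      have e1 : ω p (xx j) + Complex.I * ω p (yy j) = if p = j then 1 else 0 := by
        rw [← hΩeval, ← hxy j]; exact hZ p j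
      have e2 : conj (ω p (xx j)) + Complex.I * conj (ω p (yy j)) = 0 := by
        rw [← hΩbeval, ← hxy j]; exact hZ' p j
      have e2' : ω p (xx j) - Complex.I * ω p (yy j) = 0 := by
        have h := congrArg conj e2
        simp only [map_add, map_mul, Complex.conj_conj, Complex.conj_I, map_zero] at h
        linear_combination h
      have e3 : ω p (xb j) + Complex.I * ω p (yb j) = 0 := by
        rw [← hΩeval, ← hxb j]; exact hZb p j
      have e4 : conj (ω p (xb j)) + Complex.I * conj (ω p (yb j)) = if p = j then 1 else 0 := by
        rw [← hΩbeval, ← hxb j]; exact hZb' p j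
      have e4' : ω p (xb j) - Complex.I * ω p (yb j) = if p = j then 1 else 0 := by
        have h := congrArg conj e4
        simp only [map_add, map_mul, Complex.conj_conj, Complex.conj_I, map_zero,
          apply_ite conj, map_one] at h
        linear_combination h
      refine ⟨by linear_combination (e1 + e2')/2, by linear_combination (Complex.I/2) * (e2' - e1) + (ω p (yy j)) * Complex.I_sq,
        by linear_combination (e3 + e4')/2, by linear_combination (-Complex.I/2) * (e3 - e4') + (ω p (yb j)) * Complex.I_sq⟩
    have hvx : ∀ p j, ω p (xx j) = (if p = j then 1 else 0)/2 := fun p j => (cval p j).1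
    have hvy : ∀ p j, ω p (yy j) = -Complex.I * (if p = j then 1 else 0)/2 := fun p j => (cval p j).2.1
    have hvxb : ∀ p j, ω p (xb j) = (if p = j then 1 else 0)/2 := fun p j => (cval p j).2.2.1
    have hvyb : ∀ p j, ω p (yb j) = Complex.I * (if p = j then 1 else 0)/2 := fun p j => (cval p j).2.2.2
    have hbrkt : ∀ X Y X' Y' : g,
        ⁅(1:ℂ) ⊗ₜ[ℝ] X + Complex.I ⊗ₜ[ℝ] Y, (1:ℂ) ⊗ₜ[ℝ] X' + Complex.I ⊗ₜ[ℝ] Y'⁆ =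
          (1:ℂ) ⊗ₜ[ℝ] ⁅X, X'⁆ + Complex.I ⊗ₜ[ℝ] ⁅X, Y'⁆ + Complex.I ⊗ₜ[ℝ] ⁅Y, X'⁆
            - (1:ℂ) ⊗ₜ[ℝ] ⁅Y, Y'⁆ := by
      intro X Y X' Y'
      simp only [lie_add, add_lie, LieAlgebra.ExtendScalars.bracket_tmul, one_mul, mul_one,
        Complex.I_mul_I]
      rw [show ((-1:ℂ)) ⊗ₜ[ℝ] ⁅Y, Y'⁆ = -((1:ℂ) ⊗ₜ[ℝ] ⁅Y, Y'⁆) by rw [← TensorProduct.neg_tmul]]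
      abel
    have hcomp : ∀ (k : Fin 4) (X Y X' Y' : g),
        Ω k ⁅(1:ℂ) ⊗ₜ[ℝ] X + Complex.I ⊗ₜ[ℝ] Y, (1:ℂ) ⊗ₜ[ℝ] X' + Complex.I ⊗ₜ[ℝ] Y'⁆ =
          ω k ⁅X, X'⁆ + Complex.I * ω k ⁅X, Y'⁆ + Complex.I * ω k ⁅Y, X'⁆ - ω k ⁅Y, Y'⁆ := by
      intro k X Y X' Y'
      rw [hbrkt]
      simp only [map_add, map_sub, tmul_I_eq, map_smul, smul_eq_mul, hΩ]
    have hcompb : ∀ (k : Fin 4) (X Y X' Y' : g),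
        Ωb k ⁅(1:ℂ) ⊗ₜ[ℝ] X + Complex.I ⊗ₜ[ℝ] Y, (1:ℂ) ⊗ₜ[ℝ] X' + Complex.I ⊗ₜ[ℝ] Y'⁆ =
          conj (ω k ⁅X, X'⁆) + Complex.I * conj (ω k ⁅X, Y'⁆) + Complex.I * conj (ω k ⁅Y, X'⁆)
            - conj (ω k ⁅Y, Y'⁆) := by
      intro k X Y X' Y'
      rw [hbrkt]
      simp only [map_add, map_sub, tmul_I_eq, map_smul, smul_eq_mul, hΩb]
    have hB0 : ∀ U V : ℂ ⊗[ℝ] g, Ω 0 ⁅U, V⁆ = 0 := by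
      intro U V
      obtain ⟨X, Y, rfl⟩ := decompAux U
      obtain ⟨X', Y', rfl⟩ := decompAux V
      rw [hcomp]
      simp [s0]
    have hB1 : ∀ U V : ℂ ⊗[ℝ] g, Ω 1 ⁅U, V⁆ = -(Ω 0 U * Ω 2 V - Ω 0 V * Ω 2 U) - (Ω 0 U * Ωb 2 V - Ω 0 V * Ωb 2 U) := by
      intro U V
      obtain ⟨X, Y, rfl⟩ := decompAux U
      obtain ⟨X', Y', rfl⟩ := decompAux V
      rw [hcomp]
      simp only [s1, hΩeval, hΩbeval]
      ring_nf
      all_goals try simp only [Complex.I_sq, hI3, hI4]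
      all_goals try ring
    have hB2 : ∀ U V : ℂ ⊗[ℝ] g, Ω 2 ⁅U, V⁆ = -(Complex.I * (-1:ℂ) * (Ω 0 U * Ωb 1 V - Ω 0 V * Ωb 1 U) - Complex.I * (-1:ℂ) * (Ω 1 U * Ωb 0 V - Ω 1 V * Ωb 0 U)) := by
      intro U V
      obtain ⟨X, Y, rfl⟩ := decompAux U
      obtain ⟨X', Y', rfl⟩ := decompAux V
      rw [hcomp]
      simp only [s2, hΩeval, hΩbeval]
      ring_nf
      all_goals try simp only [Complex.I_sq, hI3, hI4]
      all_goals try ring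
    have hB3 : ∀ U V : ℂ ⊗[ℝ] g, Ω 3 ⁅U, V⁆ = -((a:ℂ) * (Ω 0 U * Ω 1 V - Ω 0 V * Ω 1 U) + B * (Ω 0 U * Ωb 0 V - Ω 0 V * Ωb 0 U) + (Ω 1 U * Ω 2 V - Ω 1 V * Ω 2 U) + (Ω 1 U * Ωb 2 V - Ω 1 V * Ωb 2 U)) := by
      intro U V
      obtain ⟨X, Y, rfl⟩ := decompAux U
      obtain ⟨X', Y', rfl⟩ := decompAux V
      rw [hcomp]
      simp only [s3, hΩeval, hΩbeval]
      ring_nf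
      all_goals try simp only [Complex.I_sq, hI3, hI4]
      all_goals try ring
    have hBb0 : ∀ U V : ℂ ⊗[ℝ] g, Ωb 0 ⁅U, V⁆ = 0 := by
      intro U V
      obtain ⟨X, Y, rfl⟩ := decompAux U
      obtain ⟨X', Y', rfl⟩ := decompAux V
      rw [hcompb]
      simp [s0]
    have hBb1 : ∀ U V : ℂ ⊗[ℝ] g, Ωb 1 ⁅U, V⁆ = -(Ωb 0 U * Ωb 2 V - Ωb 0 V * Ωb 2 U) - (Ωb 0 U * Ω 2 V - Ωb 0 V * Ω 2 U) := by
      intro U V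
      obtain ⟨X, Y, rfl⟩ := decompAux U
      obtain ⟨X', Y', rfl⟩ := decompAux V
      rw [hcompb]
      simp only [s1, map_add, map_sub, map_mul, map_neg, map_one, Complex.conj_conj, Complex.conj_I, Complex.conj_ofReal, hΩeval, hΩbeval]
      ring_nf
      all_goals try simp only [Complex.I_sq, hI3, hI4]
      all_goals try ring
    have hBb2 : ∀ U V : ℂ ⊗[ℝ] g, Ωb 2 ⁅U, V⁆ = -(-(Complex.I * (-1:ℂ)) * (Ωb 0 U * Ω 1 V - Ωb 0 V * Ω 1 U) + Complex.I * (-1:ℂ) * (Ωb 1 U * Ω 0 V - Ωb 1 V * Ω 0 U)) := by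
      intro U V
      obtain ⟨X, Y, rfl⟩ := decompAux U
      obtain ⟨X', Y', rfl⟩ := decompAux V
      rw [hcompb]
      simp only [s2, map_add, map_sub, map_mul, map_neg, map_one, Complex.conj_conj, Complex.conj_I, Complex.conj_ofReal, hΩeval, hΩbeval]
      ring_nf
      all_goals try simp only [Complex.I_sq, hI3, hI4]
      all_goals try ring
    have hBb3 : ∀ U V : ℂ ⊗[ℝ] g, Ωb 3 ⁅U, V⁆ = -((a:ℂ) * (Ωb 0 U * Ωb 1 V - Ωb 0 V * Ωb 1 U) + conj B * (Ωb 0 U * Ω 0 V - Ωb 0 V * Ω 0 U) + (Ωb 1 U * Ωb 2 V - Ωb 1 V * Ωb 2 U) + (Ωb 1 U * Ω 2 V - Ωb 1 V * Ω 2 U)) := by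
      intro U V
      obtain ⟨X, Y, rfl⟩ := decompAux U
      obtain ⟨X', Y', rfl⟩ := decompAux V
      rw [hcompb]
      simp only [s3, map_add, map_sub, map_mul, map_neg, map_one, Complex.conj_conj, Complex.conj_I, Complex.conj_ofReal, hΩeval, hΩbeval]
      ring_nf
      all_goals try simp only [Complex.I_sq, hI3, hI4]
      all_goals try ring
    have hzero : ∀ V : ℂ ⊗[ℝ] g, (∀ k, Ω k V = 0) → (∀ k, Ωb k V = 0) → V = 0 := by
      intro V h1 h2
      obtain ⟨X, Y, rfl⟩ := decompAux V
      have e1 : ∀ k : Fin 4, ω k X + Complex.I * ω k Y = 0 := by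
        intro k; rw [← hΩeval]; exact h1 k
      have e2 : ∀ k : Fin 4, ω k X - Complex.I * ω k Y = 0 := by
        intro k
        have hh : conj (ω k X) + Complex.I * conj (ω k Y) = 0 := by
          rw [← hΩbeval]; exact h2 k
        have h3 := congrArg conj hh
        simp only [map_add, map_mul, Complex.conj_conj, Complex.conj_I, map_zero] at h3
        linear_combination h3
      have hX : X = 0 := hinj X (fun k => by linear_combination (e1 k + e2 k)/2)
      have hY : Y = 0 := hinj Y (fun k => by linear_combination (-Complex.I/2) * (e1 k - e2 k) + (ω k Y) * Complex.I_sq)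
      rw [hX, hY]
      simp
    have hspan : ∀ V : ℂ ⊗[ℝ] g,
        V = (∑ k, Ω k V • Z k) + (∑ k, Ωb k V • Zb k) := by
      intro V
      have h1 : ∀ k, Ω k (V - ((∑ k, Ω k V • Z k) + (∑ k, Ωb k V • Zb k))) = 0 := by
        intro k
        fin_cases k <;>
          simp [map_sub, map_sum, map_smul, smul_eq_mul, Fin.sum_univ_four, hZ, hZ', hZb, hZb']
      have h2 : ∀ k, Ωb k (V - ((∑ k, Ω k V • Z k) + (∑ k, Ωb k V • Zb k))) = 0 := by
        intro k
        fin_cases k <;>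
          simp [map_sub, map_sum, map_smul, smul_eq_mul, Fin.sum_univ_four, hZ, hZ', hZb, hZb']
      exact sub_eq_zero.mp (hzero _ h1 h2)
    have hGsum : ∀ V C : ℂ ⊗[ℝ] g,
        G V C = (∑ k, Ω k V * G (Z k) C) + (∑ k, Ωb k V * G (Zb k) C) := by
      intro V C
      conv_lhs => rw [hspan V]
      simp [map_add, map_sum, map_smul, LinearMap.add_apply, LinearMap.coe_sum,
        Finset.sum_apply, LinearMap.smul_apply, smul_eq_mul]
    have gZZ : ∀ j k : Fin 4, G (Z j) (Z k) = (0:ℂ) := by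
      intro j k
      fin_cases j <;> fin_cases k <;>
        simp only [hxy, hxb, tmul_I_eq, map_add, map_smul, LinearMap.add_apply,
          LinearMap.smul_apply, smul_eq_mul, hG, hF]
      all_goals simp [pkFundForm, w2, cF, hJ10, hvx, hvy, hvxb, hvyb, map_div₀, map_ofNat,
        Complex.conj_I, gramM]
      all_goals try simp [Complex.ext_iff]
      all_goals try constructor
      all_goals try ring_nf
      all_goals try ring
      all_goals try norm_num
    have gbb : ∀ j k : Fin 4, G (Zb j) (Zb k) = (0:ℂ) := by
      intro j k
      fin_cases j <;> fin_cases k <;>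
        simp only [hxy, hxb, tmul_I_eq, map_add, map_smul, LinearMap.add_apply,
          LinearMap.smul_apply, smul_eq_mul, hG, hF]
      all_goals simp [pkFundForm, w2, cF, hJ10, hvx, hvy, hvxb, hvyb, map_div₀, map_ofNat,
        Complex.conj_I, gramM]
      all_goals try simp [Complex.ext_iff]
      all_goals try constructor
      all_goals try ring_nf
      all_goals try ring
      all_goals try norm_num
    have gZb : ∀ j k : Fin 4, G (Z j) (Zb k) = gramM (-1:ℝ) a r s u v j k := by
      intro j k
      fin_cases j <;> fin_cases k <;>
        simp only [hxy, hxb, tmul_I_eq, map_add, map_smul, LinearMap.add_apply,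
          LinearMap.smul_apply, smul_eq_mul, hG, hF]
      all_goals simp [pkFundForm, w2, cF, hJ10, hvx, hvy, hvxb, hvyb, map_div₀, map_ofNat,
        Complex.conj_I, gramM]
      all_goals try simp [Complex.ext_iff]
      all_goals try constructor
      all_goals try ring_nf
      all_goals try ring
      all_goals try norm_num
    have gbZ : ∀ j k : Fin 4, G (Zb j) (Z k) = gramM (-1:ℝ) a r s u v k j := by
      intro j k
      fin_cases j <;> fin_cases k <;>
        simp only [hxy, hxb, tmul_I_eq, map_add, map_smul, LinearMap.add_apply,
          LinearMap.smul_apply, smul_eq_mul, hG, hF]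
      all_goals simp [pkFundForm, w2, cF, hJ10, hvx, hvy, hvxb, hvyb, map_div₀, map_ofNat,
        Complex.conj_I, gramM]
      all_goals try simp [Complex.ext_iff]
      all_goals try constructor
      all_goals try ring_nf
      all_goals try ring
      all_goals try norm_num
    have wpZ0 : G (nabla (Zb 0) (Z 1)) (Z 0) = 0 := by
      refine mul_left_cancel₀ (show (2:ℂ) ≠ 0 by norm_num) ?_
      rw [hKoszul (Zb 0) (Z 1) (Z 0), hGsum ⁅(Zb 0), (Z 1)⁆ (Z 0), hGsum ⁅(Z 1), (Z 0)⁆ (Zb 0),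
        hGsum ⁅(Z 0), (Zb 0)⁆ (Z 1)]
      simp only [Fin.sum_univ_four, hB0, hB1, hB2, hB3, hBb0, hBb1, hBb2, hBb3, hZ, hZ', hZb,
        hZb', gZZ, gbb, gZb, gbZ, gramM,
        Fin.reduceEq, reduceIte, Complex.ofReal_one, Complex.ofReal_neg, Complex.ofReal_zero,
        mul_zero, zero_mul, mul_one, one_mul, add_zero, zero_add,
        neg_zero, sub_zero, zero_sub, sub_self, mul_neg, neg_mul, neg_neg]
      all_goals try simp [Complex.ext_iff]
      all_goals try constructor
      all_goals try ring_nf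
      all_goals try ring
      all_goals try norm_num
    have wpZ1 : G (nabla (Zb 0) (Z 1)) (Z 1) = 0 := by
      refine mul_left_cancel₀ (show (2:ℂ) ≠ 0 by norm_num) ?_
      rw [hKoszul (Zb 0) (Z 1) (Z 1), hGsum ⁅(Zb 0), (Z 1)⁆ (Z 1), hGsum ⁅(Z 1), (Z 1)⁆ (Zb 0),
        hGsum ⁅(Z 1), (Zb 0)⁆ (Z 1)]
      simp only [Fin.sum_univ_four, hB0, hB1, hB2, hB3, hBb0, hBb1, hBb2, hBb3, hZ, hZ', hZb,
        hZb', gZZ, gbb, gZb, gbZ, gramM,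
        Fin.reduceEq, reduceIte, Complex.ofReal_one, Complex.ofReal_neg, Complex.ofReal_zero,
        mul_zero, zero_mul, mul_one, one_mul, add_zero, zero_add,
        neg_zero, sub_zero, zero_sub, sub_self, mul_neg, neg_mul, neg_neg]
      all_goals try simp [Complex.ext_iff]
      all_goals try constructor
      all_goals try ring_nf
      all_goals try ring
      all_goals try norm_num
    have wpZ2 : G (nabla (Zb 0) (Z 1)) (Z 2) = 0 := by
      refine mul_left_cancel₀ (show (2:ℂ) ≠ 0 by norm_num) ?_
      rw [hKoszul (Zb 0) (Z 1) (Z 2), hGsum ⁅(Zb 0), (Z 1)⁆ (Z 2), hGsum ⁅(Z 1), (Z 2)⁆ (Zb 0),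
        hGsum ⁅(Z 2), (Zb 0)⁆ (Z 1)]
      simp only [Fin.sum_univ_four, hB0, hB1, hB2, hB3, hBb0, hBb1, hBb2, hBb3, hZ, hZ', hZb,
        hZb', gZZ, gbb, gZb, gbZ, gramM,
        Fin.reduceEq, reduceIte, Complex.ofReal_one, Complex.ofReal_neg, Complex.ofReal_zero,
        mul_zero, zero_mul, mul_one, one_mul, add_zero, zero_add,
        neg_zero, sub_zero, zero_sub, sub_self, mul_neg, neg_mul, neg_neg]
      all_goals try simp [Complex.ext_iff]
      all_goals try constructor
      all_goals try ring_nf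
      all_goals try ring
      all_goals try norm_num
    have wpZ3 : G (nabla (Zb 0) (Z 1)) (Z 3) = 0 := by
      refine mul_left_cancel₀ (show (2:ℂ) ≠ 0 by norm_num) ?_
      rw [hKoszul (Zb 0) (Z 1) (Z 3), hGsum ⁅(Zb 0), (Z 1)⁆ (Z 3), hGsum ⁅(Z 1), (Z 3)⁆ (Zb 0),
        hGsum ⁅(Z 3), (Zb 0)⁆ (Z 1)]
      simp only [Fin.sum_univ_four, hB0, hB1, hB2, hB3, hBb0, hBb1, hBb2, hBb3, hZ, hZ', hZb,
        hZb', gZZ, gbb, gZb, gbZ, gramM,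
        Fin.reduceEq, reduceIte, Complex.ofReal_one, Complex.ofReal_neg, Complex.ofReal_zero,
        mul_zero, zero_mul, mul_one, one_mul, add_zero, zero_add,
        neg_zero, sub_zero, zero_sub, sub_self, mul_neg, neg_mul, neg_neg]
      all_goals try simp [Complex.ext_iff]
      all_goals try constructor
      all_goals try ring_nf
      all_goals try ring
      all_goals try norm_num
    have wpZb1 : G (nabla (Zb 0) (Z 1)) (Zb 1) = 0 := by
      refine mul_left_cancel₀ (show (2:ℂ) ≠ 0 by norm_num) ?_
      rw [hKoszul (Zb 0) (Z 1) (Zb 1), hGsum ⁅(Zb 0), (Z 1)⁆ (Zb 1), hGsum ⁅(Z 1), (Zb 1)⁆ (Zb 0),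
        hGsum ⁅(Zb 1), (Zb 0)⁆ (Z 1)]
      simp only [Fin.sum_univ_four, hB0, hB1, hB2, hB3, hBb0, hBb1, hBb2, hBb3, hZ, hZ', hZb,
        hZb', gZZ, gbb, gZb, gbZ, gramM,
        Fin.reduceEq, reduceIte, Complex.ofReal_one, Complex.ofReal_neg, Complex.ofReal_zero,
        mul_zero, zero_mul, mul_one, one_mul, add_zero, zero_add,
        neg_zero, sub_zero, zero_sub, sub_self, mul_neg, neg_mul, neg_neg]
      all_goals try simp [Complex.ext_iff]
      all_goals try constructor
      all_goals try ring_nf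
      all_goals try ring
      all_goals try norm_num
    have wpZb3 : G (nabla (Zb 0) (Z 1)) (Zb 3) = 0 := by
      refine mul_left_cancel₀ (show (2:ℂ) ≠ 0 by norm_num) ?_
      rw [hKoszul (Zb 0) (Z 1) (Zb 3), hGsum ⁅(Zb 0), (Z 1)⁆ (Zb 3), hGsum ⁅(Z 1), (Zb 3)⁆ (Zb 0),
        hGsum ⁅(Zb 3), (Zb 0)⁆ (Z 1)]
      simp only [Fin.sum_univ_four, hB0, hB1, hB2, hB3, hBb0, hBb1, hBb2, hBb3, hZ, hZ', hZb,
        hZb', gZZ, gbb, gZb, gbZ, gramM,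
        Fin.reduceEq, reduceIte, Complex.ofReal_one, Complex.ofReal_neg, Complex.ofReal_zero,
        mul_zero, zero_mul, mul_one, one_mul, add_zero, zero_add,
        neg_zero, sub_zero, zero_sub, sub_self, mul_neg, neg_mul, neg_neg]
      all_goals try simp [Complex.ext_iff]
      all_goals try constructor
      all_goals try ring_nf
      all_goals try ring
      all_goals try norm_num
    have wpZb0 : G (nabla (Zb 0) (Z 1)) (Zb 0) = Complex.I * (a:ℂ) * ((r:ℂ) + Complex.I*(s:ℂ)) := by
      refine mul_left_cancel₀ (show (2:ℂ) ≠ 0 by norm_num) ?_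
      rw [hKoszul (Zb 0) (Z 1) (Zb 0), hGsum ⁅(Zb 0), (Z 1)⁆ (Zb 0), hGsum ⁅(Z 1), (Zb 0)⁆ (Zb 0),
        hGsum ⁅(Zb 0), (Zb 0)⁆ (Z 1)]
      simp only [Fin.sum_univ_four, hB0, hB1, hB2, hB3, hBb0, hBb1, hBb2, hBb3, hZ, hZ', hZb,
        hZb', gZZ, gbb, gZb, gbZ, gramM,
        Fin.reduceEq, reduceIte, Complex.ofReal_one, Complex.ofReal_neg, Complex.ofReal_zero,
        mul_zero, zero_mul, mul_one, one_mul, add_zero, zero_add,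
        neg_zero, sub_zero, zero_sub, sub_self, mul_neg, neg_mul, neg_neg]
      all_goals try simp [Complex.ext_iff]
      all_goals try constructor
      all_goals try ring_nf
      all_goals try ring
      all_goals try norm_num
    have wpZb2 : G (nabla (Zb 0) (Z 1)) (Zb 2) = -(Complex.I * (r:ℂ)) := by
      refine mul_left_cancel₀ (show (2:ℂ) ≠ 0 by norm_num) ?_
      rw [hKoszul (Zb 0) (Z 1) (Zb 2), hGsum ⁅(Zb 0), (Z 1)⁆ (Zb 2), hGsum ⁅(Z 1), (Zb 2)⁆ (Zb 0),
        hGsum ⁅(Zb 2), (Zb 0)⁆ (Z 1)]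
      simp only [Fin.sum_univ_four, hB0, hB1, hB2, hB3, hBb0, hBb1, hBb2, hBb3, hZ, hZ', hZb,
        hZb', gZZ, gbb, gZb, gbZ, gramM,
        Fin.reduceEq, reduceIte, Complex.ofReal_one, Complex.ofReal_neg, Complex.ofReal_zero,
        mul_zero, zero_mul, mul_one, one_mul, add_zero, zero_add,
        neg_zero, sub_zero, zero_sub, sub_self, mul_neg, neg_mul, neg_neg]
      all_goals try simp [Complex.ext_iff]
      all_goals try constructor
      all_goals try ring_nf
      all_goals try ring
      all_goals try norm_num
    have wqZ0 : G (nabla (Z 0) (Z 1)) (Z 0) = 0 := by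
      refine mul_left_cancel₀ (show (2:ℂ) ≠ 0 by norm_num) ?_
      rw [hKoszul (Z 0) (Z 1) (Z 0), hGsum ⁅(Z 0), (Z 1)⁆ (Z 0), hGsum ⁅(Z 1), (Z 0)⁆ (Z 0),
        hGsum ⁅(Z 0), (Z 0)⁆ (Z 1)]
      simp only [Fin.sum_univ_four, hB0, hB1, hB2, hB3, hBb0, hBb1, hBb2, hBb3, hZ, hZ', hZb,
        hZb', gZZ, gbb, gZb, gbZ, gramM,
        Fin.reduceEq, reduceIte, Complex.ofReal_one, Complex.ofReal_neg, Complex.ofReal_zero,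
        mul_zero, zero_mul, mul_one, one_mul, add_zero, zero_add,
        neg_zero, sub_zero, zero_sub, sub_self, mul_neg, neg_mul, neg_neg]
      all_goals try simp [Complex.ext_iff]
      all_goals try constructor
      all_goals try ring_nf
      all_goals try ring
      all_goals try norm_num
    have wqZ1 : G (nabla (Z 0) (Z 1)) (Z 1) = 0 := by
      refine mul_left_cancel₀ (show (2:ℂ) ≠ 0 by norm_num) ?_
      rw [hKoszul (Z 0) (Z 1) (Z 1), hGsum ⁅(Z 0), (Z 1)⁆ (Z 1), hGsum ⁅(Z 1), (Z 1)⁆ (Z 0),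
        hGsum ⁅(Z 1), (Z 0)⁆ (Z 1)]
      simp only [Fin.sum_univ_four, hB0, hB1, hB2, hB3, hBb0, hBb1, hBb2, hBb3, hZ, hZ', hZb,
        hZb', gZZ, gbb, gZb, gbZ, gramM,
        Fin.reduceEq, reduceIte, Complex.ofReal_one, Complex.ofReal_neg, Complex.ofReal_zero,
        mul_zero, zero_mul, mul_one, one_mul, add_zero, zero_add,
        neg_zero, sub_zero, zero_sub, sub_self, mul_neg, neg_mul, neg_neg]
      all_goals try simp [Complex.ext_iff]
      all_goals try constructor
      all_goals try ring_nf
      all_goals try ring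
      all_goals try norm_num
    have wqZ2 : G (nabla (Z 0) (Z 1)) (Z 2) = 0 := by
      refine mul_left_cancel₀ (show (2:ℂ) ≠ 0 by norm_num) ?_
      rw [hKoszul (Z 0) (Z 1) (Z 2), hGsum ⁅(Z 0), (Z 1)⁆ (Z 2), hGsum ⁅(Z 1), (Z 2)⁆ (Z 0),
        hGsum ⁅(Z 2), (Z 0)⁆ (Z 1)]
      simp only [Fin.sum_univ_four, hB0, hB1, hB2, hB3, hBb0, hBb1, hBb2, hBb3, hZ, hZ', hZb,
        hZb', gZZ, gbb, gZb, gbZ, gramM,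
        Fin.reduceEq, reduceIte, Complex.ofReal_one, Complex.ofReal_neg, Complex.ofReal_zero,
        mul_zero, zero_mul, mul_one, one_mul, add_zero, zero_add,
        neg_zero, sub_zero, zero_sub, sub_self, mul_neg, neg_mul, neg_neg]
      all_goals try simp [Complex.ext_iff]
      all_goals try constructor
      all_goals try ring_nf
      all_goals try ring
      all_goals try norm_num
    have wqZ3 : G (nabla (Z 0) (Z 1)) (Z 3) = 0 := by
      refine mul_left_cancel₀ (show (2:ℂ) ≠ 0 by norm_num) ?_
      rw [hKoszul (Z 0) (Z 1) (Z 3), hGsum ⁅(Z 0), (Z 1)⁆ (Z 3), hGsum ⁅(Z 1), (Z 3)⁆ (Z 0),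
        hGsum ⁅(Z 3), (Z 0)⁆ (Z 1)]
      simp only [Fin.sum_univ_four, hB0, hB1, hB2, hB3, hBb0, hBb1, hBb2, hBb3, hZ, hZ', hZb,
        hZb', gZZ, gbb, gZb, gbZ, gramM,
        Fin.reduceEq, reduceIte, Complex.ofReal_one, Complex.ofReal_neg, Complex.ofReal_zero,
        mul_zero, zero_mul, mul_one, one_mul, add_zero, zero_add,
        neg_zero, sub_zero, zero_sub, sub_self, mul_neg, neg_mul, neg_neg]
      all_goals try simp [Complex.ext_iff]
      all_goals try constructor
      all_goals try ring_nf
      all_goals try ring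
      all_goals try norm_num
    have wqZb0 : G (nabla (Z 0) (Z 1)) (Zb 0) = 0 := by
      refine mul_left_cancel₀ (show (2:ℂ) ≠ 0 by norm_num) ?_
      rw [hKoszul (Z 0) (Z 1) (Zb 0), hGsum ⁅(Z 0), (Z 1)⁆ (Zb 0), hGsum ⁅(Z 1), (Zb 0)⁆ (Z 0),
        hGsum ⁅(Zb 0), (Z 0)⁆ (Z 1)]
      simp only [Fin.sum_univ_four, hB0, hB1, hB2, hB3, hBb0, hBb1, hBb2, hBb3, hZ, hZ', hZb,
        hZb', gZZ, gbb, gZb, gbZ, gramM,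
        Fin.reduceEq, reduceIte, Complex.ofReal_one, Complex.ofReal_neg, Complex.ofReal_zero,
        mul_zero, zero_mul, mul_one, one_mul, add_zero, zero_add,
        neg_zero, sub_zero, zero_sub, sub_self, mul_neg, neg_mul, neg_neg]
      all_goals try simp [Complex.ext_iff]
      all_goals try constructor
      all_goals try ring_nf
      all_goals try ring
      all_goals try norm_num
    have wqZb1 : G (nabla (Z 0) (Z 1)) (Zb 1) = 0 := by
      refine mul_left_cancel₀ (show (2:ℂ) ≠ 0 by norm_num) ?_
      rw [hKoszul (Z 0) (Z 1) (Zb 1), hGsum ⁅(Z 0), (Z 1)⁆ (Zb 1), hGsum ⁅(Z 1), (Zb 1)⁆ (Z 0),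
        hGsum ⁅(Zb 1), (Z 0)⁆ (Z 1)]
      simp only [Fin.sum_univ_four, hB0, hB1, hB2, hB3, hBb0, hBb1, hBb2, hBb3, hZ, hZ', hZb,
        hZb', gZZ, gbb, gZb, gbZ, gramM,
        Fin.reduceEq, reduceIte, Complex.ofReal_one, Complex.ofReal_neg, Complex.ofReal_zero,
        mul_zero, zero_mul, mul_one, one_mul, add_zero, zero_add,
        neg_zero, sub_zero, zero_sub, sub_self, mul_neg, neg_mul, neg_neg]
      all_goals try simp [Complex.ext_iff]
      all_goals try constructor
      all_goals try ring_nf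
      all_goals try ring
      all_goals try norm_num
    have wqZb2 : G (nabla (Z 0) (Z 1)) (Zb 2) = 0 := by
      refine mul_left_cancel₀ (show (2:ℂ) ≠ 0 by norm_num) ?_
      rw [hKoszul (Z 0) (Z 1) (Zb 2), hGsum ⁅(Z 0), (Z 1)⁆ (Zb 2), hGsum ⁅(Z 1), (Zb 2)⁆ (Z 0),
        hGsum ⁅(Zb 2), (Z 0)⁆ (Z 1)]
      simp only [Fin.sum_univ_four, hB0, hB1, hB2, hB3, hBb0, hBb1, hBb2, hBb3, hZ, hZ', hZb,
        hZb', gZZ, gbb, gZb, gbZ, gramM,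
        Fin.reduceEq, reduceIte, Complex.ofReal_one, Complex.ofReal_neg, Complex.ofReal_zero,
        mul_zero, zero_mul, mul_one, one_mul, add_zero, zero_add,
        neg_zero, sub_zero, zero_sub, sub_self, mul_neg, neg_mul, neg_neg]
      all_goals try simp [Complex.ext_iff]
      all_goals try constructor
      all_goals try ring_nf
      all_goals try ring
      all_goals try norm_num
    have wqZb3 : G (nabla (Z 0) (Z 1)) (Zb 3) = 0 := by
      refine mul_left_cancel₀ (show (2:ℂ) ≠ 0 by norm_num) ?_
      rw [hKoszul (Z 0) (Z 1) (Zb 3), hGsum ⁅(Z 0), (Z 1)⁆ (Zb 3), hGsum ⁅(Z 1), (Zb 3)⁆ (Z 0),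
        hGsum ⁅(Zb 3), (Z 0)⁆ (Z 1)]
      simp only [Fin.sum_univ_four, hB0, hB1, hB2, hB3, hBb0, hBb1, hBb2, hBb3, hZ, hZ', hZb,
        hZb', gZZ, gbb, gZb, gbZ, gramM,
        Fin.reduceEq, reduceIte, Complex.ofReal_one, Complex.ofReal_neg, Complex.ofReal_zero,
        mul_zero, zero_mul, mul_one, one_mul, add_zero, zero_add,
        neg_zero, sub_zero, zero_sub, sub_self, mul_neg, neg_mul, neg_neg]
      all_goals try simp [Complex.ext_iff]
      all_goals try constructor
      all_goals try ring_nf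
      all_goals try ring
      all_goals try norm_num
    have hval1 : G (nabla (Z 0) (Z 2)) (Zb 1) = -(Complex.I * (r:ℂ)) := by
      refine mul_left_cancel₀ (show (2:ℂ) ≠ 0 by norm_num) ?_
      rw [hKoszul (Z 0) (Z 2) (Zb 1), hGsum ⁅(Z 0), (Z 2)⁆ (Zb 1), hGsum ⁅(Z 2), (Zb 1)⁆ (Z 0),
        hGsum ⁅(Zb 1), (Z 0)⁆ (Z 2)]
      simp only [Fin.sum_univ_four, hB0, hB1, hB2, hB3, hBb0, hBb1, hBb2, hBb3, hZ, hZ', hZb,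
        hZb', gZZ, gbb, gZb, gbZ, gramM,
        Fin.reduceEq, reduceIte, Complex.ofReal_one, Complex.ofReal_neg, Complex.ofReal_zero,
        mul_zero, zero_mul, mul_one, one_mul, add_zero, zero_add,
        neg_zero, sub_zero, zero_sub, sub_self, mul_neg, neg_mul, neg_neg]
      all_goals try simp [Complex.ext_iff]
      all_goals try constructor
      all_goals try ring_nf
      all_goals try ring
      all_goals try norm_num
    have hval3a : G (nabla (Z 3) (Z 1)) (Zb 1) = 0 := by
      refine mul_left_cancel₀ (show (2:ℂ) ≠ 0 by norm_num) ?_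
      rw [hKoszul (Z 3) (Z 1) (Zb 1), hGsum ⁅(Z 3), (Z 1)⁆ (Zb 1), hGsum ⁅(Z 1), (Zb 1)⁆ (Z 3),
        hGsum ⁅(Zb 1), (Z 3)⁆ (Z 1)]
      simp only [Fin.sum_univ_four, hB0, hB1, hB2, hB3, hBb0, hBb1, hBb2, hBb3, hZ, hZ', hZb,
        hZb', gZZ, gbb, gZb, gbZ, gramM,
        Fin.reduceEq, reduceIte, Complex.ofReal_one, Complex.ofReal_neg, Complex.ofReal_zero,
        mul_zero, zero_mul, mul_one, one_mul, add_zero, zero_add,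
        neg_zero, sub_zero, zero_sub, sub_self, mul_neg, neg_mul, neg_neg]
      all_goals try simp [Complex.ext_iff]
      all_goals try constructor
      all_goals try ring_nf
      all_goals try ring
      all_goals try norm_num
    have hval3b : G (nabla (Zb 3) (Z 1)) (Zb 1) = 0 := by
      refine mul_left_cancel₀ (show (2:ℂ) ≠ 0 by norm_num) ?_
      rw [hKoszul (Zb 3) (Z 1) (Zb 1), hGsum ⁅(Zb 3), (Z 1)⁆ (Zb 1), hGsum ⁅(Z 1), (Zb 1)⁆ (Zb 3),
        hGsum ⁅(Zb 1), (Zb 3)⁆ (Z 1)]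
      simp only [Fin.sum_univ_four, hB0, hB1, hB2, hB3, hBb0, hBb1, hBb2, hBb3, hZ, hZ', hZb,
        hZb', gZZ, gbb, gZb, gbZ, gramM,
        Fin.reduceEq, reduceIte, Complex.ofReal_one, Complex.ofReal_neg, Complex.ofReal_zero,
        mul_zero, zero_mul, mul_one, one_mul, add_zero, zero_add,
        neg_zero, sub_zero, zero_sub, sub_self, mul_neg, neg_mul, neg_neg]
      all_goals try simp [Complex.ext_iff]
      all_goals try constructor
      all_goals try ring_nf
      all_goals try ring
      all_goals try norm_num
    have uniq : ∀ V : ℂ ⊗[ℝ] g, (∀ j, G V (Z j) = 0) → (∀ j, G V (Zb j) = 0) → V = 0 := by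
      intro V h1 h2
      have qq : ∀ j : Fin 4,
          (Ω 0 V * G (Z 0) (Z j) + Ω 1 V * G (Z 1) (Z j) + Ω 2 V * G (Z 2) (Z j)
            + Ω 3 V * G (Z 3) (Z j))
          + (Ωb 0 V * G (Zb 0) (Z j) + Ωb 1 V * G (Zb 1) (Z j) + Ωb 2 V * G (Zb 2) (Z j)
            + Ωb 3 V * G (Zb 3) (Z j)) = 0 := by
        intro j
        have h := hGsum V (Z j)
        rw [h1 j] at h
        simp only [Fin.sum_univ_four] at h
        linear_combination -h
      have pp : ∀ j : Fin 4,
          (Ω 0 V * G (Z 0) (Zb j) + Ω 1 V * G (Z 1) (Zb j) + Ω 2 V * G (Z 2) (Zb j)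
            + Ω 3 V * G (Z 3) (Zb j))
          + (Ωb 0 V * G (Zb 0) (Zb j) + Ωb 1 V * G (Zb 1) (Zb j) + Ωb 2 V * G (Zb 2) (Zb j)
            + Ωb 3 V * G (Zb 3) (Zb j)) = 0 := by
        intro j
        have h := hGsum V (Zb j)
        rw [h2 j] at h
        simp only [Fin.sum_univ_four] at h
        linear_combination -h
      have q0 := qq 0
      have q1 := qq 1
      have q2 := qq 2
      have q3 := qq 3
      have p0 := pp 0
      have p1 := pp 1
      have p2 := pp 2
      have p3 := pp 3
      simp only [gZZ, gbb, gZb, gbZ, gramM, Fin.reduceEq, reduceIte,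
        Complex.ofReal_one, Complex.ofReal_neg, Complex.ofReal_zero,
        mul_zero, zero_mul, add_zero, zero_add] at q0 q1 q2 q3 p0 p1 p2 p3
      have b0 : Ωb 0 V = 0 := by
        have hx : Ωb 0 V * (Complex.I * ((r:ℂ) - Complex.I*(s:ℂ))) = 0 := by linear_combination -q3
        rcases mul_eq_zero.mp hx with h | h
        · exact h
        · exact absurd h (mul_ne_zero Complex.I_ne_zero hne1)
      have b1 : Ωb 1 V = 0 := by
        have hx : Ωb 1 V * (s:ℂ) = 0 := by linear_combination q1 + (Complex.I*(v:ℂ)) * b0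
        rcases mul_eq_zero.mp hx with h | h
        · exact h
        · exact absurd h hsC
      have b2 : Ωb 2 V = 0 := by
        have hx : Ωb 2 V * ((-1:ℂ)*(r:ℂ)) = 0 := by
          linear_combination q2 + ((a:ℂ)*(-1:ℂ)*((r:ℂ) + Complex.I*(s:ℂ))) * b0
        rcases mul_eq_zero.mp hx with h | h
        · exact h
        · exact absurd h hdrC
      have b3 : Ωb 3 V = 0 := by
        have hx : Ωb 3 V * (Complex.I * ((r:ℂ) + Complex.I*(s:ℂ))) = 0 := by
          linear_combination q0 + (u:ℂ) * b0 - (Complex.I*(v:ℂ)) * b1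
            + ((a:ℂ)*(-1:ℂ)*((r:ℂ) - Complex.I*(s:ℂ))) * b2
        rcases mul_eq_zero.mp hx with h | h
        · exact h
        · exact absurd h (mul_ne_zero Complex.I_ne_zero hne2)
      have a0 : Ω 0 V = 0 := by
        have hx : Ω 0 V * (Complex.I * ((r:ℂ) + Complex.I*(s:ℂ))) = 0 := by linear_combination p3
        rcases mul_eq_zero.mp hx with h | h
        · exact h
        · exact absurd h (mul_ne_zero Complex.I_ne_zero hne2)
      have a1 : Ω 1 V = 0 := by
        have hx : Ω 1 V * (s:ℂ) = 0 := by linear_combination p1 - (Complex.I*(v:ℂ)) * a0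
        rcases mul_eq_zero.mp hx with h | h
        · exact h
        · exact absurd h hsC
      have a2 : Ω 2 V = 0 := by
        have hx : Ω 2 V * ((-1:ℂ)*(r:ℂ)) = 0 := by
          linear_combination p2 + ((a:ℂ)*(-1:ℂ)*((r:ℂ) - Complex.I*(s:ℂ))) * a0
        rcases mul_eq_zero.mp hx with h | h
        · exact h
        · exact absurd h hdrC
      have a3 : Ω 3 V = 0 := by
        have hx : Ω 3 V * (Complex.I * ((r:ℂ) - Complex.I*(s:ℂ))) = 0 := by
          linear_combination -p0 - (u:ℂ) * a0 - (Complex.I*(v:ℂ)) * a1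
            - ((a:ℂ)*(-1:ℂ)*((r:ℂ) + Complex.I*(s:ℂ))) * a2
        rcases mul_eq_zero.mp hx with h | h
        · exact h
        · exact absurd h (mul_ne_zero Complex.I_ne_zero hne1)
      rw [hspan V, Fin.sum_univ_four, Fin.sum_univ_four, a0, a1, a2, a3, b0, b1, b2, b3]
      simp
    have hWpp : nabla (Z 0) (Z 1) = 0 := by
      refine uniq _ ?_ ?_
      · intro j
        fin_cases j
        exacts [wqZ0, wqZ1, wqZ2, wqZ3]
      · intro j
        fin_cases j
        exacts [wqZb0, wqZb1, wqZb2, wqZb3]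
    have hVp : nabla (Zb 0) (Z 1) + (-Complex.I) • Z 2 = 0 := by
      refine uniq _ ?_ ?_
      · intro j
        rw [map_add, LinearMap.add_apply, map_smul, LinearMap.smul_apply, smul_eq_mul]
        fin_cases j <;> simp [wpZ0, wpZ1, wpZ2, wpZ3, gZZ]
      · intro j
        rw [map_add, LinearMap.add_apply, map_smul, LinearMap.smul_apply, smul_eq_mul]
        fin_cases j <;>
          simp [wpZb0, wpZb1, wpZb2, wpZb3, gZb, gramM, Complex.ext_iff]
    have hWp : nabla (Zb 0) (Z 1) = -((-Complex.I) • Z 2) := eq_neg_of_add_eq_zero_left hVp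
    have hCvec : ⁅Z 0, Zb 0⁆ = (-B) • Z 3 + (conj B) • Zb 3 := by
      rw [hspan ⁅Z 0, Zb 0⁆, Fin.sum_univ_four, Fin.sum_univ_four]
      simp [hB0, hB1, hB2, hB3, hBb0, hBb1, hBb2, hBb3, hZ, hZ', hZb, hZb']
    refine ⟨?_, ?_⟩
    · rw [hWpp, hWp, hCvec, map_zero]
      simp only [map_add, map_smul, map_neg, map_sub, map_zero, LinearMap.add_apply,
        LinearMap.smul_apply, LinearMap.neg_apply, LinearMap.sub_apply, LinearMap.zero_apply,
        smul_eq_mul, sub_zero]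
      rw [hval1, hval3a, hval3b]
      all_goals try simp [Complex.ext_iff]
      all_goals try constructor
      all_goals try ring_nf
      all_goals try ring
      all_goals try norm_num
    · simpa using hrr

end Paper
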